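/- arXiv:1109.4693 — 10 statements merged into one kernel-verified Lean document; each statement's English description precedes it below -/
import Mathlib

section
/- Let f and g be monic polynomials over F_q of degrees m and n with all roots nonzero. Then the composed multiplication f ⊙ g is irreducible over F_q if and only if f and g are both irreducible over F_q and gcd(m, n) = 1. -/
/-!
Over a finite field `K` with `q` elements, an algebraic `x` of degree `d` satisfies
`x ^ q ^ k = x` exactly when `d ∣ k`. Hence the degree of a product `x * y` divides the lcm of
the degrees of `x` and `y`; and when these degrees are coprime and `x, y ≠ 0` it is their
product, since the Frobenius power fixing both `x * y` and `y` also fixes `x`.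
The polynomial `f ⊙ g` is monic of degree `m * n` and vanishes at `α * β` for roots `α` of `f`
and `β` of `g`, so it is irreducible iff `α * β` has degree `m * n`, and comparing
`m * n ≤ lcm (deg α) (deg β) ≤ deg α * deg β ≤ m * n` gives the equivalence.
-/

open Polynomial

noncomputable def acRoots (F : Type*) [Field F] (f : F[X]) : Multiset (AlgebraicClosure F) :=
  (f.map (algebraMap F (AlgebraicClosure F))).roots

/-- Composed multiplication: `(f ⊙ g)(x) = ∏_α ∏_β (x - αβ)` over all roots `α` of `f`
and `β` of `g` in the algebraic closure. -/
noncomputable def compMul (F : Type*) [Field F] (f g : F[X]) : (AlgebraicClosure F)[X] :=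
  ((acRoots F f).bind fun α => (acRoots F g).map fun β => X - C (α * β)).prod

theorem Nat.eq_mul_iff_of_dvd_lcm {a b c m n : ℕ} (ha : 0 < a) (hb : 0 < b) (ham : a ≤ m)
    (hbn : b ≤ n) (hc : c ∣ Nat.lcm a b) (hcop : Nat.Coprime a b → c = a * b) :
    c = m * n ↔ a = m ∧ b = n ∧ Nat.Coprime m n := by
  constructor
  · intro hcmn
    have hlcm : m * n ≤ Nat.lcm a b := hcmn ▸ Nat.le_of_dvd (Nat.lcm_pos ha hb) hc
    have hab : a * b ≤ m * n := Nat.mul_le_mul ham hbn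
    have hlcm_le : Nat.lcm a b ≤ a * b := Nat.le_of_dvd (by positivity) (Nat.lcm_dvd_mul a b)
    have hma : a = m := by nlinarith
    have hnb : b = n := by subst hma; nlinarith
    subst hma hnb
    refine ⟨rfl, rfl, ?_⟩
    have := Nat.lcm_eq_mul_iff.mp (le_antisymm hlcm_le hlcm)
    omega
  · rintro ⟨rfl, rfl, hmn⟩
    exact hcop hmn

section FiniteField

variable {K L : Type*} [Field K] [Finite K] [Field L] [Algebra K L]

theorem pow_card_pow_eq_self_iff {x : L} (hx : IsIntegral K x) (k : ℕ) :
    x ^ Nat.card K ^ k = x ↔ (minpoly K x).natDegree ∣ k := by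
  rw [(minpoly.irreducible hx).natDegree_dvd_iff_dvd_X_pow_card_pow_sub_X, minpoly.dvd_iff]
  simp [sub_eq_zero]

theorem natDegree_minpoly_mul_dvd_lcm {x y : L} (hx : IsIntegral K x) (hy : IsIntegral K y) :
    (minpoly K (x * y)).natDegree ∣ Nat.lcm (minpoly K x).natDegree (minpoly K y).natDegree := by
  rw [← pow_card_pow_eq_self_iff (hx.mul hy), mul_pow,
    (pow_card_pow_eq_self_iff hx _).mpr (Nat.dvd_lcm_left _ _),
    (pow_card_pow_eq_self_iff hy _).mpr (Nat.dvd_lcm_right _ _)]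

theorem natDegree_minpoly_dvd_natDegree_minpoly_mul_mul {x y : L} (hx : IsIntegral K x)
    (hy : IsIntegral K y) (hy0 : y ≠ 0) :
    (minpoly K x).natDegree ∣ (minpoly K (x * y)).natDegree * (minpoly K y).natDegree := by
  rw [← pow_card_pow_eq_self_iff hx]
  have hxy := (pow_card_pow_eq_self_iff (hx.mul hy) _).mpr
    (dvd_mul_right _ (minpoly K y).natDegree)
  rw [mul_pow, (pow_card_pow_eq_self_iff hy _).mpr (dvd_mul_left _ _)] at hxy
  exact mul_right_cancel₀ hy0 hxy

theorem natDegree_minpoly_mul_of_coprime {x y : L} (hx : IsIntegral K x) (hy : IsIntegral K y)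
    (hx0 : x ≠ 0) (hy0 : y ≠ 0)
    (hcop : Nat.Coprime (minpoly K x).natDegree (minpoly K y).natDegree) :
    (minpoly K (x * y)).natDegree = (minpoly K x).natDegree * (minpoly K y).natDegree := by
  refine Nat.dvd_antisymm (hcop.lcm_eq_mul ▸ natDegree_minpoly_mul_dvd_lcm hx hy) ?_
  refine hcop.mul_dvd_of_dvd_of_dvd ?_ ?_
  · exact hcop.dvd_of_dvd_mul_right (natDegree_minpoly_dvd_natDegree_minpoly_mul_mul hx hy hy0)
  · rw [mul_comm x y]
    exact hcop.symm.dvd_of_dvd_mul_right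
      (natDegree_minpoly_dvd_natDegree_minpoly_mul_mul hy hx hx0)

end FiniteField

theorem Polynomial.Monic.irreducible_iff_natDegree_minpoly_eq {K L : Type*} [Field K] [Field L]
    [Algebra K L] {p : K[X]} (hp : p.Monic) {x : L} (hx : IsIntegral K x) (hpx : aeval x p = 0) :
    Irreducible p ↔ (minpoly K x).natDegree = p.natDegree := by
  refine ⟨fun hirr => by rw [← minpoly.eq_of_irreducible_of_monic hirr hpx hp], fun hdeg => ?_⟩
  rw [eq_of_monic_of_dvd_of_natDegree_le (minpoly.monic hx) hp (minpoly.dvd K x hpx) hdeg.ge]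
  exact minpoly.irreducible hx

section CompMul

variable {F : Type*} [Field F]

theorem card_acRoots (f : F[X]) : Multiset.card (acRoots F f) = f.natDegree := by
  rw [acRoots, ← (IsAlgClosed.splits _).natDegree_eq_card_roots, natDegree_map]

theorem aeval_eq_zero_of_mem_acRoots {f : F[X]} {α : AlgebraicClosure F}
    (hα : α ∈ acRoots F f) : aeval α f = 0 := by
  rw [aeval_def, ← eval_map]
  exact (mem_roots'.mp hα).2

theorem natDegree_minpoly_le_of_mem_acRoots {f : F[X]} {α : AlgebraicClosure F}
    (hα : α ∈ acRoots F f) : (minpoly F α).natDegree ≤ f.natDegree :=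
  natDegree_le_of_dvd (minpoly.dvd F α (aeval_eq_zero_of_mem_acRoots hα))
    (by rintro rfl; simp [acRoots] at hα)

theorem compMul_eq_prod (f g : F[X]) :
    compMul F f g =
      (((acRoots F f).bind fun α => (acRoots F g).map (α * ·)).map fun γ => X - C γ).prod := by
  simp only [compMul, Multiset.map_bind, Multiset.map_map, Function.comp_def]

theorem monic_compMul (f g : F[X]) : (compMul F f g).Monic := by
  rw [compMul_eq_prod]
  exact monic_multiset_prod_of_monic _ _ fun γ _ => monic_X_sub_C γ

theorem natDegree_compMul (f g : F[X]) :
    (compMul F f g).natDegree = f.natDegree * g.natDegree := by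
  simp [compMul_eq_prod, natDegree_multiset_prod_X_sub_C_eq_card, Multiset.card_bind,
    card_acRoots]

theorem isRoot_compMul {f g : F[X]} {α β : AlgebraicClosure F} (hα : α ∈ acRoots F f)
    (hβ : β ∈ acRoots F g) : (compMul F f g).IsRoot (α * β) := by
  rw [compMul_eq_prod, IsRoot, eval_multiset_prod]
  refine Multiset.prod_eq_zero (Multiset.mem_map.mpr ⟨X - C (α * β), ?_, by simp⟩)
  exact Multiset.mem_map_of_mem _ (Multiset.mem_bind.mpr ⟨α, hα, Multiset.mem_map_of_mem _ hβ⟩)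

end CompMul

/-- Brawley–Carlitz: `f ⊙ g` is irreducible over `F_q` iff `f` and `g` are irreducible
and their degrees are coprime.  `F` is the polynomial over `F_q` representing `f ⊙ g`. -/
theorem stmt3 (Fq : Type*) [Field Fq] [Fintype Fq] (f g : Fq[X]) (m n : ℕ)
    (hf : f.Monic) (hg : g.Monic) (hm : f.natDegree = m) (hn : g.natDegree = n)
    (h0f : (0 : AlgebraicClosure Fq) ∉ acRoots Fq f)
    (h0g : (0 : AlgebraicClosure Fq) ∉ acRoots Fq g)
    (F : Fq[X]) (hF : F.map (algebraMap Fq (AlgebraicClosure Fq)) = compMul Fq f g) :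
    Irreducible F ↔ Irreducible f ∧ Irreducible g ∧ Nat.Coprime m n := by
  have hinj := (algebraMap Fq (AlgebraicClosure Fq)).injective
  have hFmonic : F.Monic := hinj.monic_map_iff.mpr (hF ▸ monic_compMul f g)
  have hFdeg : F.natDegree = m * n := by
    rw [← natDegree_map_eq_of_injective hinj, hF, natDegree_compMul, hm, hn]
  rcases Nat.eq_zero_or_pos m with rfl | hm0
  · exact iff_of_false (fun h => h.natDegree_pos.ne' (by simp [hFdeg]))
      fun h => h.1.natDegree_pos.ne' hm
  rcases Nat.eq_zero_or_pos n with rfl | hn0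
  · exact iff_of_false (fun h => h.natDegree_pos.ne' (by simp [hFdeg]))
      fun h => h.2.1.natDegree_pos.ne' hn
  obtain ⟨α, hα⟩ : ∃ α, α ∈ acRoots Fq f :=
    Multiset.card_pos_iff_exists_mem.mp (by rwa [card_acRoots, hm])
  obtain ⟨β, hβ⟩ : ∃ β, β ∈ acRoots Fq g :=
    Multiset.card_pos_iff_exists_mem.mp (by rwa [card_acRoots, hn])
  have hαi : IsIntegral Fq α := Algebra.IsIntegral.isIntegral α
  have hβi : IsIntegral Fq β := Algebra.IsIntegral.isIntegral β
  have hαβ : aeval (α * β) F = 0 := by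
    rw [aeval_def, ← eval_map, hF]
    exact isRoot_compMul hα hβ
  rw [hf.irreducible_iff_natDegree_minpoly_eq hαi (aeval_eq_zero_of_mem_acRoots hα),
    hg.irreducible_iff_natDegree_minpoly_eq hβi (aeval_eq_zero_of_mem_acRoots hβ),
    hFmonic.irreducible_iff_natDegree_minpoly_eq (hαi.mul hβi) hαβ, hm, hn, hFdeg]
  exact Nat.eq_mul_iff_of_dvd_lcm (minpoly.natDegree_pos hαi) (minpoly.natDegree_pos hβi)
    (hm ▸ natDegree_minpoly_le_of_mem_acRoots hα) (hn ▸ natDegree_minpoly_le_of_mem_acRoots hβ)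
    (natDegree_minpoly_mul_dvd_lcm hαi hβi)
    (natDegree_minpoly_mul_of_coprime hαi hβi (ne_of_mem_of_not_mem hα h0f)
      (ne_of_mem_of_not_mem hβ h0g))
end

section
/- Let f be a monic irreducible polynomial over F_q of degree n and order t (i.e., t is the multiplicative order of any root of f), and let r be a positive integer. If f(x) divides f(x^r) in F_q[x], then r ≡ q^i (mod t) for some i with 0 ≤ i ≤ n−1. -/
/-!
Since `f ∣ f(X ^ r)`, `α ^ r` is again a root of `f = minpoly α`. The conjugates of `α` over a
finite field are its images under the Galois group of `F_q(α)/F_q`, which is generated by the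
`q`-power Frobenius and has order `n`; so `α ^ r = α ^ q ^ i` with `i < n`, and comparing exponents
modulo the order of `α` gives the claim.
-/

open Polynomial IntermediateField

namespace FiniteField

variable {K L : Type*} [Field K] [Fintype K] [Field L] [Algebra K L]

theorem exists_lt_finrank_eq_pow_card_pow_of_minpoly_eq [Finite L] {x y : L}
    (h : minpoly K y = minpoly K x) :
    ∃ i < Module.finrank K L, y = x ^ Fintype.card K ^ i := by
  obtain ⟨σ, rfl⟩ := (Normal.minpoly_eq_iff_mem_orbit L).mp h
  obtain ⟨i, rfl⟩ := (bijective_frobeniusAlgEquivOfAlgebraic_pow K L).2 σ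
  refine ⟨i, i.2, ?_⟩
  show (frobeniusAlgEquivOfAlgebraic K L ^ i.1) x = _
  rw [AlgEquiv.coe_pow, coe_frobeniusAlgEquivOfAlgebraic_iterate]

theorem exists_lt_natDegree_eq_pow_card_pow_of_aeval_minpoly_eq_zero {x y : L}
    (hx : IsIntegral K x) (hy : aeval y (minpoly K x) = 0) :
    ∃ i < (minpoly K x).natDegree, y = x ^ Fintype.card K ^ i := by
  have : FiniteDimensional K K⟮x⟯ := adjoin.finiteDimensional hx
  have : Finite K⟮x⟯ := Module.finite_of_finite K
  have hsplit := Normal.splits (F := K) inferInstance (AdjoinSimple.gen K x)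
  rw [minpoly_gen] at hsplit
  obtain ⟨z, rfl⟩ : y ∈ (algebraMap K⟮x⟯ L).range := by
    refine hsplit.mem_range_of_isRoot (map_ne_zero (minpoly.ne_zero hx)) ?_
    rwa [Polynomial.map_map, ← IsScalarTower.algebraMap_eq, IsRoot, eval_map_algebraMap]
  have hz : minpoly K z = minpoly K (AdjoinSimple.gen K x) := by
    rw [minpoly_gen, ← minpoly.algebraMap_eq (algebraMap K⟮x⟯ L).injective]
    exact (minpoly.eq_of_irreducible_of_monic (minpoly.irreducible hx) hy (minpoly.monic hx)).symm
  obtain ⟨i, hi, rfl⟩ := exists_lt_finrank_eq_pow_card_pow_of_minpoly_eq hz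
  exact ⟨i, adjoin.finrank hx ▸ hi, by simp⟩

end FiniteField

theorem stmt5_general (Fq : Type*) [Field Fq] [Fintype Fq] (f : Fq[X]) (n t r : ℕ)
    (hf : f.Monic) (hirr : Irreducible f) (hn : f.natDegree = n)
    (h0 : f.coeff 0 ≠ 0)
    (α : AlgebraicClosure Fq) (hα : aeval α f = 0) (ht : t = orderOf α)
    (hdvd : f ∣ f.comp (X ^ r)) :
    ∃ i < n, r ≡ (Fintype.card Fq) ^ i [MOD t] := by
  have hmin : f = minpoly Fq α := minpoly.eq_of_irreducible_of_monic hirr hα hf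
  have hroot : aeval (α ^ r) f = 0 := by
    obtain ⟨g, hg⟩ := hdvd
    simpa [aeval_comp, hα] using congrArg (aeval α) hg
  have hα0 : α ≠ 0 := by
    rintro rfl
    simp [aeval_def, eval₂_at_zero, h0] at hα
  rw [hmin] at hroot hn
  obtain ⟨i, hi, he⟩ := FiniteField.exists_lt_natDegree_eq_pow_card_pow_of_aeval_minpoly_eq_zero
    (Algebra.IsIntegral.isIntegral α) hroot
  refine ⟨i, hn ▸ hi, ?_⟩
  rw [ht, ← hα0.isUnit.unit_spec, orderOf_units]
  exact pow_eq_pow_iff_modEq.mp (Units.ext (by simpa using he))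

theorem stmt5 (Fq : Type*) [Field Fq] [Fintype Fq] (f : Fq[X]) (n t r : ℕ)
    (hf : f.Monic) (hirr : Irreducible f) (hn : f.natDegree = n)
    (h0 : f.coeff 0 ≠ 0) (hr : 0 < r)
    (α : AlgebraicClosure Fq) (hα : aeval α f = 0) (ht : t = orderOf α)
    (hdvd : f ∣ f.comp (X ^ r)) :
    ∃ i < n, r ≡ (Fintype.card Fq) ^ i [MOD t] :=
  stmt5_general Fq f n t r hf hirr hn h0 α hα ht hdvd
end

section
/- Let r be an odd prime and q a prime power coprime to r such that q is a primitive root modulo r and r^2 does not divide q^{r−1} − 1. Then, for every k ≥ 0, the polynomial Φ_r(x^{r^k}) = x^{(r−1)r^k} + x^{(r−2)r^k} + ⋯ + x^{r^k} + 1 is irreducible over F_q. -/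
/-!
Since `Φ_r(x^{r^k}) = Φ_{r^{k+1}}(x)`, and over `𝔽_q` the irreducible factors of `Φ_n` all
have degree the order of `q` modulo `n`, it suffices that `q` generates `(ℤ/r^{k+1})ˣ`. Reduction
mod `r` shows that `r - 1` divides this order, and `q^{r-1} = 1 + r a` with `r ∤ a` has order
exactly `r^k` modulo `r^{k+1}`.
-/

open Polynomial

namespace Polynomial

theorem cyclotomic_prime_comp_X_pow_prime_pow (R : Type*) [CommRing R] {p : ℕ} (hp : p.Prime)
    (k : ℕ) : (cyclotomic p R).comp (X ^ p ^ k) = cyclotomic (p ^ (k + 1)) R := by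
  have := Fact.mk hp
  simp [cyclotomic_prime, cyclotomic_prime_pow_eq_geom_sum hp]

theorem cyclotomic_irreducible_of_orderOf_eq_totient {K : Type*} [Field K] [Fintype K] {n : ℕ}
    (hn : (Fintype.card K).Coprime n) (h : orderOf (Fintype.card K : ZMod n) = n.totient) :
    Irreducible (cyclotomic n K) := by
  obtain ⟨f, hp, hK⟩ := FiniteField.card K (ringChar K)
  have := Fact.mk hp
  have hpn : (ringChar K).Coprime n :=
    Nat.Coprime.coprime_dvd_left (hK ▸ dvd_pow_self _ f.ne_zero) hn
  refine irreducible_of_dvd_cyclotomic_of_natDegree hK hpn dvd_rfl ?_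
  rw [natDegree_cyclotomic, ← h, ← orderOf_units, ZMod.coe_unitOfCoprime, ← hK]

end Polynomial

theorem ZMod.exists_natCast_pow_eq_one_add_mul {p q n : ℕ} (hq : (q : ZMod p) ^ n = 1)
    (hsq : ¬ p ^ 2 ∣ q ^ n - 1) (m : ℕ) :
    ∃ a : ℤ, (q : ZMod m) ^ n = 1 + p * a ∧ ¬ (p : ℤ) ∣ a := by
  have hq1 : 1 ≤ q ^ n := Nat.one_le_iff_ne_zero.mpr fun h ↦ hsq (by simp [h])
  obtain ⟨c, hc⟩ : p ∣ q ^ n - 1 := by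
    rw [← ZMod.natCast_eq_zero_iff, Nat.cast_sub hq1, Nat.cast_pow, hq, Nat.cast_one, sub_self]
  refine ⟨c, ?_, fun hpc ↦ ?_⟩
  · have : q ^ n = 1 + p * c := by omega
    exact_mod_cast congrArg (Nat.cast : ℕ → ZMod m) this
  · exact hsq (hc ▸ pow_two p ▸ mul_dvd_mul_left p (Int.natCast_dvd_natCast.mp hpc))

theorem ZMod.orderOf_natCast_prime_pow_eq_totient {p q : ℕ} (hp : p.Prime) (hp2 : p ≠ 2)
    (hprim : orderOf (q : ZMod p) = p - 1) (hsq : ¬ p ^ 2 ∣ q ^ (p - 1) - 1) (k : ℕ) :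
    orderOf (q : ZMod (p ^ (k + 1))) = (p ^ (k + 1)).totient := by
  set d := orderOf (q : ZMod (p ^ (k + 1)))
  have hp1 : p - 1 ≠ 0 := by have := hp.two_le; omega
  have hdvd : p - 1 ∣ d := hprim ▸ by
    simpa using orderOf_map_dvd (ZMod.castHom (dvd_pow_self p k.succ_ne_zero) (ZMod p)).toMonoidHom
      (q : ZMod (p ^ (k + 1)))
  obtain ⟨a, ha, hna⟩ := exists_natCast_pow_eq_one_add_mul
    (hprim ▸ pow_orderOf_eq_one _) hsq (p ^ (k + 1))
  have hquot : d / (p - 1) = p ^ k := by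
    rw [← Nat.gcd_eq_right hdvd, ← orderOf_pow' _ hp1, ha,
      orderOf_one_add_mul_prime hp hp2 a hna k]
  rw [Nat.totient_prime_pow_succ hp, ← hquot, Nat.div_mul_cancel hdvd]

theorem stmt7 (Fq : Type*) [Field Fq] [Fintype Fq] (r : ℕ)
    (hr : r.Prime) (hrodd : Odd r) (hcop : Nat.Coprime (Fintype.card Fq) r)
    (hprim : orderOf ((Fintype.card Fq : ZMod r)) = r - 1)
    (hsq : ¬ (r ^ 2 ∣ (Fintype.card Fq) ^ (r - 1) - 1)) :
    ∀ k : ℕ, Irreducible ((cyclotomic r Fq).comp (X ^ r ^ k)) := by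
  intro k
  rw [cyclotomic_prime_comp_X_pow_prime_pow Fq hr k]
  exact cyclotomic_irreducible_of_orderOf_eq_totient (hcop.pow_right _)
    (ZMod.orderOf_natCast_prime_pow_eq_totient hr (hrodd.ne_two_of_dvd_nat dvd_rfl) hprim hsq k)
end

section
/- Let r be a prime, q a prime power coprime to r, and f an irreducible monic polynomial over F_q of degree n with f(0) ≠ 0 such that (i) f(x) divides f(x^r), (ii) q is a primitive root modulo r, and (iii) gcd(n, r−1) = 1. Then F(x) = f(x^r)/f(x) is an irreducible polynomial over F_q of degree n(r−1), and moreover F = f ⊙ Φ_r, the composed multiplication of f with the r-th cyclotomic polynomial. -/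
/-!
Let `α` be a root of `f` in the algebraic closure and `ζ` a primitive `r`-th root of unity.
Since `α ^ r` is again a root of `f`, it generates the same field as `α`, so `a ↦ a ^ r` permutes
the roots of `f`. Hence `f(x^r) = ∏_a (x^r - a^r) = ∏_a ∏_{ω^r = 1} (x - aω) = f · (f ⊙ Φ_r)`,
which gives `F = f ⊙ Φ_r`. Over `F_q` the degree of an element `x` is the least `k` with
`x ^ q ^ k = x`. If `αζ` is fixed by `q ^ k`-th powers then so is `(αζ) ^ r = α ^ r`, hence so
are `α` and `ζ`; thus the degree of `αζ` is `lcm(n, r - 1) = n(r - 1) = deg F`, and `F`, which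
vanishes at `αζ`, is its minimal polynomial.
-/

open Polynomial

open IntermediateField

theorem natCast_ne_zero_of_coprime_card {R : Type*} [CommRing R] [Fintype R] [Nontrivial R]
    {m : ℕ} (h : m.Coprime (Fintype.card R)) : (m : R) ≠ 0 := fun hm =>
  CharP.ringChar_ne_one <|
    Nat.eq_one_of_dvd_coprimes h (ringChar.dvd hm) (ringChar.dvd (Nat.cast_card_eq_zero R))

theorem IsPrimitiveRoot.pow_pow_eq_self_iff {M : Type*} [CommMonoid M] {β : M} {r : ℕ}
    (hβ : IsPrimitiveRoot β r) (hr : r ≠ 0) (m k : ℕ) :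
    β ^ m ^ k = β ↔ orderOf (m : ZMod r) ∣ k := by
  nth_rw 2 [← pow_one β]
  rw [(hβ.isOfFinOrder hr).pow_eq_pow_iff_modEq, ← hβ.eq_orderOf, orderOf_dvd_iff_pow_eq_one,
    ← ZMod.natCast_eq_natCast_iff, Nat.cast_pow, Nat.cast_one]

section FiniteBase

variable {K L : Type*} [Field K] [Fintype K] [Field L] [Algebra K L]

theorem pow_card_pow_eq_self_iff_natDegree_minpoly_dvd {x : L} (hx : IsIntegral K x) (k : ℕ) :
    x ^ Fintype.card K ^ k = x ↔ (minpoly K x).natDegree ∣ k := by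
  rw [(minpoly.irreducible hx).natDegree_dvd_iff_dvd_X_pow_card_pow_sub_X, minpoly.dvd_iff,
    Nat.card_eq_fintype_card]
  simp [sub_eq_zero]

theorem natDegree_minpoly_eq_of_pow_card_pow_eq_self_iff {x : L} (hx : IsIntegral K x) {m : ℕ}
    (h : ∀ k, x ^ Fintype.card K ^ k = x ↔ m ∣ k) : (minpoly K x).natDegree = m := by
  simp_rw [pow_card_pow_eq_self_iff_natDegree_minpoly_dvd hx] at h
  exact Nat.dvd_antisymm ((h m).mpr dvd_rfl) ((h _).mp dvd_rfl)

theorem natDegree_minpoly_mul_eq_lcm {α β : L} (hα : IsIntegral K α) (hβ : IsIntegral K β)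
    (hα0 : α ≠ 0) {r : ℕ} (hβr : β ^ r = 1) (hαr : minpoly K (α ^ r) = minpoly K α) :
    (minpoly K (α * β)).natDegree =
      Nat.lcm (minpoly K α).natDegree (minpoly K β).natDegree := by
  refine natDegree_minpoly_eq_of_pow_card_pow_eq_self_iff (hα.mul hβ) fun k => ?_
  rw [Nat.lcm_dvd_iff, ← pow_card_pow_eq_self_iff_natDegree_minpoly_dvd hα,
    ← pow_card_pow_eq_self_iff_natDegree_minpoly_dvd hβ]
  refine ⟨fun h => ?_, fun ⟨hαk, hβk⟩ => by rw [mul_pow, hαk, hβk]⟩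
  have hαr_fixed : (α ^ r) ^ Fintype.card K ^ k = α ^ r := by
    have hxr : (α * β) ^ r = α ^ r := by rw [mul_pow, hβr, mul_one]
    rw [← hxr, pow_right_comm, h]
  have hαk : α ^ Fintype.card K ^ k = α := by
    rwa [pow_card_pow_eq_self_iff_natDegree_minpoly_dvd (hα.pow r), hαr,
      ← pow_card_pow_eq_self_iff_natDegree_minpoly_dvd hα] at hαr_fixed
  rw [mul_pow, hαk] at h
  exact ⟨hαk, mul_left_cancel₀ hα0 h⟩

theorem IsPrimitiveRoot.natDegree_minpoly_eq_orderOf {ζ : L} {r : ℕ} (hζ : IsPrimitiveRoot ζ r)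
    (hr : r ≠ 0) : (minpoly K ζ).natDegree = orderOf (Fintype.card K : ZMod r) :=
  natDegree_minpoly_eq_of_pow_card_pow_eq_self_iff (hζ.isIntegral (Nat.pos_of_ne_zero hr)).tower_top
    (hζ.pow_pow_eq_self_iff hr _)

end FiniteBase

section Conjugates

variable {K L : Type*} [Field K] [Field L] [Algebra K L]

theorem exists_aeval_pow_eq_self {α : L} (hα : IsIntegral K α) {r : ℕ}
    (h : (minpoly K (α ^ r)).natDegree = (minpoly K α).natDegree) :
    ∃ g : K[X], aeval (α ^ r) g = α := by
  have hle : K⟮α ^ r⟯ ≤ K⟮α⟯ := adjoin_simple_le_iff.mpr (pow_mem (mem_adjoin_simple_self K α) r)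
  have := adjoin.finiteDimensional hα
  have heq : K⟮α ^ r⟯ = K⟮α⟯ := eq_of_le_of_finrank_eq hle
    (by rw [adjoin.finrank hα, adjoin.finrank (hα.pow r), h])
  have hmem : α ∈ (K⟮α ^ r⟯).toSubalgebra := heq ▸ mem_adjoin_simple_self K α
  rwa [adjoin_simple_toSubalgebra_of_isAlgebraic (hα.pow r).isAlgebraic,
    Algebra.adjoin_singleton_eq_range_aeval] at hmem

theorem injOn_pow_of_natDegree_minpoly_pow_eq {α : L} (hα : IsIntegral K α) {r : ℕ}
    (h : (minpoly K (α ^ r)).natDegree = (minpoly K α).natDegree) :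
    Set.InjOn (· ^ r) {a : L | aeval a (minpoly K α) = 0} := by
  obtain ⟨g, hg⟩ := exists_aeval_pow_eq_self hα h
  -- `g(X^r) - X` vanishes at `α`, hence at every conjugate of `α`
  have hconj : ∀ a : L, aeval a (minpoly K α) = 0 → aeval (a ^ r) g = a := by
    intro a ha
    obtain ⟨c, hc⟩ := minpoly.dvd K α (p := g.comp (X ^ r) - X) (by simp [aeval_comp, hg])
    simpa [aeval_comp, ha, sub_eq_zero] using congrArg (aeval a) hc
  intro a ha b hb hab
  rw [← hconj a ha, ← hconj b hb]
  exact congrArg (aeval · g) hab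

theorem aeval_pow_eq_zero_of_mul_eq_comp_X_pow {f g : K[X]} {r : ℕ}
    (h : f * g = f.comp (X ^ r)) {a : L} (ha : aeval a f = 0) : aeval (a ^ r) f = 0 := by
  rw [show a ^ r = aeval a (X ^ r : K[X]) by simp, ← aeval_comp, ← h, map_mul, ha, zero_mul]

theorem map_pow_aroots_eq_self {f g : K[X]} (hmon : f.Monic) (hirr : Irreducible f)
    (hsep : f.Separable) {r : ℕ} (h : f * g = f.comp (X ^ r)) :
    (f.aroots L).map (· ^ r) = f.aroots L := by
  have hmem : ∀ a : L, a ∈ f.aroots L ↔ aeval a f = 0 := fun a =>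
    mem_aroots.trans (and_iff_right hmon.ne_zero)
  have hmin : ∀ {a : L}, aeval a f = 0 → minpoly K a = f := fun ha =>
    (minpoly.eq_of_irreducible_of_monic hirr ha hmon).symm
  have hinj : ∀ a ∈ f.aroots L, ∀ b ∈ f.aroots L, a ^ r = b ^ r → a = b := by
    intro a ha b hb hab
    rw [hmem] at ha hb
    refine injOn_pow_of_natDegree_minpoly_pow_eq ⟨f, hmon, ha⟩ ?_ ?_ ?_ hab
    · rw [hmin ha, hmin (aeval_pow_eq_zero_of_mul_eq_comp_X_pow h ha)]
    · simpa [hmin ha] using ha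
    · simpa [hmin ha] using hb
  refine Multiset.eq_of_le_of_card_le ?_ (Multiset.card_map _ _).ge
  refine (Multiset.le_iff_subset ((nodup_roots hsep.map).map_on hinj)).mpr fun y hy => ?_
  obtain ⟨a, ha, rfl⟩ := Multiset.mem_map.mp hy
  exact (hmem _).mpr (aeval_pow_eq_zero_of_mul_eq_comp_X_pow h ((hmem a).mp ha))

end Conjugates

theorem IsPrimitiveRoot.nthRoots_pow_eq_map_mul {R : Type*} [CommRing R] [IsDomain R] {ζ : R}
    {r : ℕ} (hζ : IsPrimitiveRoot ζ r) (b : R) :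
    nthRoots r (b ^ r) = (nthRoots r 1).map (b * ·) := by
  rw [hζ.nthRoots_eq rfl, hζ.nthRoots_eq (one_pow r), Multiset.map_map]
  simp only [Function.comp_def, mul_one, mul_comm b]

theorem nthRoots_one_eq_cons_roots_cyclotomic {R : Type*} [CommRing R] [IsDomain R] {r : ℕ}
    (hr : r.Prime) : nthRoots r (1 : R) = 1 ::ₘ (cyclotomic r R).roots := by
  have := Fact.mk hr
  have hne : cyclotomic r R * (X - 1) ≠ 0 := by
    rw [cyclotomic_prime_mul_X_sub_one]
    exact X_pow_sub_C_ne_zero hr.pos 1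
  rw [nthRoots, C_1, ← cyclotomic_prime_mul_X_sub_one, roots_mul hne, ← C_1, roots_X_sub_C,
    add_comm, Multiset.singleton_add]

theorem X_pow_sub_C_pow_eq_mul_prod {L : Type*} [Field L] {ζ : L} {r : ℕ} (hr : r.Prime)
    (hζ : IsPrimitiveRoot ζ r) (b : L) :
    X ^ r - C (b ^ r) = (X - C b) * ((cyclotomic r L).roots.map fun z => X - C (b * z)).prod := by
  rw [(X_pow_sub_C_splits_of_isPrimitiveRoot hζ rfl).eq_prod_roots_of_monic
    (monic_X_pow_sub_C _ hr.ne_zero), ← nthRoots, hζ.nthRoots_pow_eq_map_mul,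
    nthRoots_one_eq_cons_roots_cyclotomic hr]
  simp [Multiset.map_map]

theorem comp_X_pow_eq_mul_prod {L : Type*} [Field L] {ζ : L} {r : ℕ} (hr : r.Prime)
    (hζ : IsPrimitiveRoot ζ r) {g : L[X]} (hmon : g.Monic) (hsplit : g.Splits)
    (hperm : g.roots.map (· ^ r) = g.roots) :
    g.comp (X ^ r) =
      g * (g.roots.bind fun a => (cyclotomic r L).roots.map fun z => X - C (a * z)).prod := by
  have hprod := hsplit.eq_prod_roots_of_monic hmon
  calc g.comp (X ^ r) = (g.roots.map fun a => X ^ r - C a).prod := by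
        conv_lhs => rw [hprod]
        simp [multiset_prod_comp, Multiset.map_map]
    _ = (g.roots.map fun a => X ^ r - C (a ^ r)).prod := by
        conv_lhs => rw [← hperm]
        rw [Multiset.map_map]
        rfl
    _ = _ := by
        simp_rw [X_pow_sub_C_pow_eq_mul_prod hr hζ, Multiset.prod_map_mul, ← hprod,
          Multiset.prod_bind]

theorem map_eq_compMul_cyclotomic {K : Type*} [Field K] [PerfectField K] {r : ℕ} (hr : r.Prime)
    [NeZero (r : K)] {f g : K[X]} (hmon : f.Monic) (hirr : Irreducible f)
    (h : f * g = f.comp (X ^ r)) :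
    g.map (algebraMap K (AlgebraicClosure K)) = compMul K f (cyclotomic r K) := by
  obtain ⟨ζ, hζ⟩ := HasEnoughRootsOfUnity.exists_primitiveRoot (AlgebraicClosure K) r
  have hcomp := comp_X_pow_eq_mul_prod hr hζ (hmon.map _) (IsAlgClosed.splits _)
    (map_pow_aroots_eq_self hmon hirr (PerfectField.separable_of_irreducible hirr) h)
  rw [show (f.map (algebraMap K _)).comp (X ^ r) = f.map _ * g.map _ by
    rw [← Polynomial.map_mul, h, Polynomial.map_comp, Polynomial.map_pow, map_X]] at hcomp
  rw [mul_left_cancel₀ (hmon.map _).ne_zero hcomp, compMul, acRoots, acRoots, map_cyclotomic]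

theorem isRoot_compMul_cyclotomic_mul {K : Type*} [Field K] {f : K[X]} (hf : f ≠ 0) {r : ℕ}
    (hr : 0 < r) {a ζ : AlgebraicClosure K} (ha : aeval a f = 0) (hζ : IsPrimitiveRoot ζ r) :
    (compMul K f (cyclotomic r K)).IsRoot (a * ζ) := by
  have hζ_mem : ζ ∈ acRoots K (cyclotomic r K) := by
    rw [acRoots, map_cyclotomic]
    exact (mem_roots (cyclotomic_ne_zero r _)).mpr (hζ.isRoot_cyclotomic hr)
  rw [compMul, IsRoot, eval_multiset_prod]
  refine Multiset.prod_eq_zero (Multiset.mem_map.mpr ⟨X - C (a * ζ), ?_, by simp⟩)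
  exact Multiset.mem_bind.mpr ⟨a, mem_aroots.mpr ⟨hf, ha⟩, Multiset.mem_map_of_mem _ hζ_mem⟩

theorem Polynomial.Monic.of_mul_eq_comp_X_pow {R : Type*} [CommRing R] [Nontrivial R]
    {f g : R[X]} (hmon : f.Monic) {r : ℕ} (hr : r ≠ 0) (h : f * g = f.comp (X ^ r)) : g.Monic :=
  hmon.of_mul_monic_left (h ▸ hmon.comp (monic_X_pow r) (by simpa using hr))

theorem natDegree_eq_of_mul_eq_comp_X_pow {R : Type*} [CommRing R] [IsDomain R] {f g : R[X]}
    (hmon : f.Monic) {r : ℕ} (hr : r ≠ 0) (h : f * g = f.comp (X ^ r)) :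
    g.natDegree = f.natDegree * (r - 1) := by
  have hdeg := congrArg natDegree h
  rw [hmon.natDegree_mul (hmon.of_mul_eq_comp_X_pow hr h), natDegree_comp,
    natDegree_X_pow] at hdeg
  rw [Nat.mul_sub_one]
  omega

theorem stmt9_general (Fq : Type*) [Field Fq] [Fintype Fq] (r n : ℕ)
    (hr : r.Prime) (hcop : Nat.Coprime r (Fintype.card Fq))
    (f : Fq[X]) (hmon : f.Monic) (hirr : Irreducible f) (hn : f.natDegree = n)
    (h0 : f.coeff 0 ≠ 0)
    (hprim : orderOf ((Fintype.card Fq : ZMod r)) = r - 1)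
    (hgcd : Nat.Coprime n (r - 1))
    (F : Fq[X]) (hF : f * F = f.comp (X ^ r)) :
    Irreducible F ∧ F.natDegree = n * (r - 1) ∧
      F.map (algebraMap Fq (AlgebraicClosure Fq)) = compMul Fq f (cyclotomic r Fq) := by
  have : NeZero (r : Fq) := ⟨natCast_ne_zero_of_coprime_card hcop⟩
  have hmap := map_eq_compMul_cyclotomic hr hmon hirr hF
  have hFdeg := hn ▸ natDegree_eq_of_mul_eq_comp_X_pow hmon hr.ne_zero hF
  obtain ⟨ζ, hζ⟩ := HasEnoughRootsOfUnity.exists_primitiveRoot (AlgebraicClosure Fq) r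
  obtain ⟨α, hα⟩ := IsAlgClosed.exists_aeval_eq_zero (AlgebraicClosure Fq) f
    (degree_pos_of_irreducible hirr).ne'
  have hα0 : α ≠ 0 := by
    rintro rfl
    exact h0 (by simpa [← coeff_zero_eq_aeval_zero'] using hα)
  have hfα : minpoly Fq α = f := (minpoly.eq_of_irreducible_of_monic hirr hα hmon).symm
  have hfαr : minpoly Fq (α ^ r) = f := (minpoly.eq_of_irreducible_of_monic hirr
    (aeval_pow_eq_zero_of_mul_eq_comp_X_pow hF hα) hmon).symm
  have hdeg : (minpoly Fq (α * ζ)).natDegree = n * (r - 1) := by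
    rw [natDegree_minpoly_mul_eq_lcm (Algebra.IsIntegral.isIntegral α)
      (Algebra.IsIntegral.isIntegral ζ) hα0 hζ.pow_eq_one (hfαr.trans hfα.symm), hfα, hn,
      hζ.natDegree_minpoly_eq_orderOf hr.ne_zero, hprim, hgcd.lcm_eq_mul]
  have hroot : aeval (α * ζ) F = 0 := by
    rw [← eval_map_algebraMap, hmap]
    exact isRoot_compMul_cyclotomic_mul hmon.ne_zero hr.pos hα hζ
  have hFmin : F = minpoly Fq (α * ζ) := eq_of_monic_of_dvd_of_natDegree_le
    (minpoly.monic (Algebra.IsIntegral.isIntegral _)) (hmon.of_mul_eq_comp_X_pow hr.ne_zero hF)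
    (minpoly.dvd _ _ hroot) (by rw [hFdeg, hdeg])
  exact ⟨hFmin ▸ minpoly.irreducible (Algebra.IsIntegral.isIntegral _), hFdeg, hmap⟩

theorem stmt9 (Fq : Type*) [Field Fq] [Fintype Fq] (r n : ℕ)
    (hr : r.Prime) (hcop : Nat.Coprime r (Fintype.card Fq))
    (f : Fq[X]) (hmon : f.Monic) (hirr : Irreducible f) (hn : f.natDegree = n)
    (h0 : f.coeff 0 ≠ 0)
    (hdvd : f ∣ f.comp (X ^ r))
    (hprim : orderOf ((Fintype.card Fq : ZMod r)) = r - 1)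
    (hgcd : Nat.Coprime n (r - 1))
    (F : Fq[X]) (hF : f * F = f.comp (X ^ r)) :
    Irreducible F ∧ F.natDegree = n * (r - 1) ∧
      F.map (algebraMap Fq (AlgebraicClosure Fq)) = compMul Fq f (cyclotomic r Fq) :=
  stmt9_general Fq r n hr hcop f hmon hirr hn h0 hprim hgcd F hF
end

section
/- Let n = p_1^{e_1} ⋯ p_s^{e_s} be the factorization of a positive integer n into powers of distinct primes, and suppose gcd(n, q) = 1 where q is a prime power. Then over F_q (or over any field containing all relevant roots of unity), Φ_n = Φ_{p_1^{e_1}} ⊙ Φ_{p_2^{e_2}} ⊙ ⋯ ⊙ Φ_{p_s^{e_s}}, where ⊙ denotes composed multiplication. In particular, every product ξ_1 ξ_2 ⋯ ξ_s of primitive p_i^{e_i}-th roots of unity is a primitive n-th root of unity, and all such products are distinct. -/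
/-!
Let `n = m₁ ⋯ m_s` with the `mᵢ = pᵢ^{eᵢ}` pairwise coprime. The order of a product of
commuting elements of pairwise coprime orders is the product of the orders, so a product of
primitive `mᵢ`-th roots of unity is a primitive `n`-th root. Conversely each factor can be
recovered from the product: if `k ≡ 1 (mod m_j)` and `mᵢ ∣ k` for `i ≠ j` (Chinese remainder
theorem), then `(ξ₁ ⋯ ξ_s)^k = ξ_j`. Hence `(ξᵢ) ↦ ∏ ξᵢ` is injective, and since `φ` is
multiplicative both sides have `φ(n)` elements, so it is a bijection onto the primitive `n`-th
roots, which are the roots of `Φ_n`.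
-/

open Polynomial
open scoped Function

theorem Nat.totient_prod_of_pairwise_coprime {ι : Type*} (s : Finset ι) (m : ι → ℕ)
    (hm : (s : Set ι).Pairwise (Nat.Coprime on m)) :
    (∏ i ∈ s, m i).totient = ∏ i ∈ s, (m i).totient := by
  classical
  induction s using Finset.induction_on with
  | empty => simp
  | insert a s ha ih =>
    rw [Finset.coe_insert, Set.pairwise_insert_of_symm] at hm
    rw [Finset.prod_insert ha, Finset.prod_insert ha, Nat.totient_mul, ih hm.1]
    exact Nat.Coprime.prod_right fun i hi => hm.2 i hi (ne_of_mem_of_not_mem hi ha).symm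

theorem IsPrimitiveRoot.prod_of_pairwise_coprime {M ι : Type*} [CommMonoid M] (s : Finset ι)
    {ξ : ι → M} {m : ι → ℕ} (hξ : ∀ i ∈ s, IsPrimitiveRoot (ξ i) (m i))
    (hm : (s : Set ι).Pairwise (Nat.Coprime on m)) :
    IsPrimitiveRoot (∏ i ∈ s, ξ i) (∏ i ∈ s, m i) := by
  classical
  induction s using Finset.induction_on with
  | empty => simp
  | insert a s ha ih =>
    rw [Finset.coe_insert, Set.pairwise_insert_of_symm] at hm
    have hξa := hξ a (Finset.mem_insert_self a s)
    have hξs := ih (fun i hi => hξ i (Finset.mem_insert_of_mem hi)) hm.1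
    have hcop : (m a).Coprime (∏ i ∈ s, m i) :=
      Nat.Coprime.prod_right fun i hi => hm.2 i hi (ne_of_mem_of_not_mem hi ha).symm
    rw [Finset.prod_insert ha, Finset.prod_insert ha, IsPrimitiveRoot.iff_orderOf,
      (Commute.all _ _).orderOf_mul_eq_mul_orderOf_of_coprime
        (by rwa [← hξa.eq_orderOf, ← hξs.eq_orderOf]),
      ← hξa.eq_orderOf, ← hξs.eq_orderOf]

section PairwiseCoprime

variable {ι : Type*} [Fintype ι] {m : ι → ℕ}

theorem Nat.exists_modEq_one_and_dvd_of_pairwise_coprime (hm : Pairwise (Nat.Coprime on m))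
    (j : ι) : ∃ k : ℕ, k ≡ 1 [MOD m j] ∧ ∀ i ≠ j, m i ∣ k := by
  classical
  have hcop : (m j).Coprime (∏ i ∈ Finset.univ.erase j, m i) :=
    Nat.Coprime.prod_right fun i hi => hm (Finset.ne_of_mem_erase hi).symm
  obtain ⟨k, hk1, hk0⟩ := Nat.chineseRemainder hcop 1 0
  refine ⟨k, hk1, fun i hi => ?_⟩
  exact (Finset.dvd_prod_of_mem m (Finset.mem_erase.2 ⟨hi, Finset.mem_univ i⟩)).trans
    (Nat.modEq_zero_iff_dvd.1 hk0)

theorem prod_pow_eq_of_pow_eq_one {M : Type*} [CommMonoid M] {x : ι → M}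
    (hx : ∀ i, x i ^ m i = 1) {j : ι} {k : ℕ} (hk : k ≡ 1 [MOD m j])
    (hdvd : ∀ i ≠ j, m i ∣ k) : (∏ i, x i) ^ k = x j := by
  rw [← Finset.prod_pow, Fintype.prod_eq_single j fun i hi => ?_,
    pow_eq_pow_of_modEq hk (hx j), pow_one]
  obtain ⟨c, rfl⟩ := hdvd i hi
  rw [pow_mul, hx i, one_pow]

theorem eq_of_prod_eq_of_pow_eq_one {M : Type*} [CommMonoid M]
    (hm : Pairwise (Nat.Coprime on m)) {x y : ι → M} (hx : ∀ i, x i ^ m i = 1)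
    (hy : ∀ i, y i ^ m i = 1) (hxy : ∏ i, x i = ∏ i, y i) : x = y := by
  funext j
  obtain ⟨k, hk, hdvd⟩ := Nat.exists_modEq_one_and_dvd_of_pairwise_coprime hm j
  rw [← prod_pow_eq_of_pow_eq_one hx hk hdvd, hxy, prod_pow_eq_of_pow_eq_one hy hk hdvd]

theorem cyclotomic_eq_prod_X_sub_prod_primitiveRoots [DecidableEq ι] {K : Type*} [CommRing K]
    [IsDomain K] (hm : Pairwise (Nat.Coprime on m)) (hm0 : ∀ i, m i ≠ 0) {ζ : K}
    (hζ : IsPrimitiveRoot ζ (∏ i, m i)) :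
    cyclotomic (∏ i, m i) K =
      ∏ ξ : (∀ i, {x : K // x ∈ primitiveRoots (m i) K}), (X - C (∏ i, (ξ i : K))) := by
  have hn : 0 < ∏ i, m i := Finset.prod_pos fun i _ => Nat.pos_of_ne_zero (hm0 i)
  let F : (∀ i, {x : K // x ∈ primitiveRoots (m i) K}) →
      {x : K // x ∈ primitiveRoots (∏ i, m i) K} := fun ξ =>
    ⟨∏ i, (ξ i : K), (mem_primitiveRoots hn).2 <|
      IsPrimitiveRoot.prod_of_pairwise_coprime _
        (fun i _ => (mem_primitiveRoots (Nat.pos_of_ne_zero (hm0 i))).1 (ξ i).2)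
        (hm.set_pairwise _)⟩
  have hF_inj : Function.Injective F := fun ξ η h =>
    funext fun i => Subtype.ext <| congrFun (eq_of_prod_eq_of_pow_eq_one hm
      (fun i => (isPrimitiveRoot_of_mem_primitiveRoots (ξ i).2).pow_eq_one)
      (fun i => (isPrimitiveRoot_of_mem_primitiveRoots (η i).2).pow_eq_one)
      (congrArg Subtype.val h)) i
  have hcard_factor (i : ι) : (primitiveRoots (m i) K).card = (m i).totient := by
    obtain ⟨c, hc⟩ := Finset.dvd_prod_of_mem m (Finset.mem_univ i)
    exact (hζ.pow hn (hc.trans (mul_comm _ _))).card_primitiveRoots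
  have hF_bij : Function.Bijective F := by
    refine (Fintype.bijective_iff_injective_and_card F).2 ⟨hF_inj, ?_⟩
    simp only [Fintype.card_pi, Fintype.card_coe, hcard_factor, hζ.card_primitiveRoots,
      Nat.totient_prod_of_pairwise_coprime _ _ (hm.set_pairwise _)]
  rw [cyclotomic_eq_prod_X_sub_primitiveRoots hζ, ← Finset.prod_coe_sort]
  exact (Fintype.prod_bijective F hF_bij _ _ fun ξ => rfl).symm

end PairwiseCoprime

theorem FiniteField.natCast_ne_zero_of_coprime_card {F : Type*} [Field F] [Fintype F] {n : ℕ}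
    (hn : n.Coprime (Fintype.card F)) : (n : F) ≠ 0 := fun h =>
  CharP.ringChar_ne_one <| Nat.eq_one_of_dvd_coprimes hn (ringChar.dvd h)
    (ringChar.dvd (FiniteField.cast_card_eq_zero F))

theorem stmt11_general (Fq : Type*) [Field Fq] [Fintype Fq] (s : ℕ) (p e : Fin s → ℕ)
    (hp : ∀ i, (p i).Prime) (hdist : Function.Injective p)
    (n : ℕ) (hn : n = ∏ i, p i ^ e i)
    (hcop : Nat.Coprime n (Fintype.card Fq)) :
    (cyclotomic n (AlgebraicClosure Fq) =
        ∏ ξ : (∀ i : Fin s,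
            {x : AlgebraicClosure Fq // x ∈ primitiveRoots (p i ^ e i) (AlgebraicClosure Fq)}),
          (X - C (∏ i, (ξ i : AlgebraicClosure Fq)))) ∧
    (∀ ξ : Fin s → AlgebraicClosure Fq,
        (∀ i, IsPrimitiveRoot (ξ i) (p i ^ e i)) → IsPrimitiveRoot (∏ i, ξ i) n) ∧
    (∀ ξ ζ : Fin s → AlgebraicClosure Fq,
        (∀ i, IsPrimitiveRoot (ξ i) (p i ^ e i)) → (∀ i, IsPrimitiveRoot (ζ i) (p i ^ e i)) →
        (∏ i, ξ i) = (∏ i, ζ i) → ξ = ζ) := by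
  have hm : Pairwise (Nat.Coprime on fun i => p i ^ e i) := fun i j hij =>
    Nat.Coprime.pow _ _ ((Nat.coprime_primes (hp i) (hp j)).2 (hdist.ne hij))
  have : NeZero (n : Fq) := ⟨FiniteField.natCast_ne_zero_of_coprime_card hcop⟩
  obtain ⟨ζ, hζ⟩ := HasEnoughRootsOfUnity.exists_primitiveRoot (AlgebraicClosure Fq) n
  subst hn
  refine ⟨cyclotomic_eq_prod_X_sub_prod_primitiveRoots hm
      (fun i => (pow_pos (hp i).pos _).ne') hζ,
    fun ξ hξ => IsPrimitiveRoot.prod_of_pairwise_coprime _ (fun i _ => hξ i) (hm.set_pairwise _),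
    fun ξ ζ hξ hζ => eq_of_prod_eq_of_pow_eq_one hm (fun i => (hξ i).pow_eq_one)
      (fun i => (hζ i).pow_eq_one)⟩

/-- if `n = p₁^{e₁} ⋯ p_s^{e_s}` with the `pᵢ` distinct primes and
`gcd(n, q) = 1`, then over the algebraic closure of `F_q` the cyclotomic polynomial `Φ_n`
is the composed multiplication of the `Φ_{pᵢ^{eᵢ}}`, i.e. it equals the product of
`X - ξ₁⋯ξ_s` over all tuples of primitive `pᵢ^{eᵢ}`-th roots of unity; in particular every
such product of primitive roots is a primitive `n`-th root of unity and distinct tuples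
give distinct products. -/
theorem stmt11 (Fq : Type*) [Field Fq] [Fintype Fq] (s : ℕ) (p e : Fin s → ℕ)
    (hp : ∀ i, (p i).Prime) (he : ∀ i, 0 < e i) (hdist : Function.Injective p)
    (n : ℕ) (hn : n = ∏ i, p i ^ e i)
    (hcop : Nat.Coprime n (Fintype.card Fq)) :
    (cyclotomic n (AlgebraicClosure Fq) =
        ∏ ξ : (∀ i : Fin s,
            {x : AlgebraicClosure Fq // x ∈ primitiveRoots (p i ^ e i) (AlgebraicClosure Fq)}),
          (X - C (∏ i, (ξ i : AlgebraicClosure Fq)))) ∧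
    (∀ ξ : Fin s → AlgebraicClosure Fq,
        (∀ i, IsPrimitiveRoot (ξ i) (p i ^ e i)) → IsPrimitiveRoot (∏ i, ξ i) n) ∧
    (∀ ξ ζ : Fin s → AlgebraicClosure Fq,
        (∀ i, IsPrimitiveRoot (ξ i) (p i ^ e i)) → (∀ i, IsPrimitiveRoot (ζ i) (p i ^ e i)) →
        (∏ i, ξ i) = (∏ i, ζ i) → ξ = ζ) :=
  stmt11_general Fq s p e hp hdist n hn hcop
end

section
/- Let m and n be coprime positive integers with gcd(mn, q) = 1, and let Φ_m = ∏_i f_i and Φ_n = ∏_j g_j be the factorizations into monic irreducible polynomials over F_q. Then Φ_{mn} = ∏_i ∏_j (f_i ⊙ g_j), and if moreover gcd(ord_m(q), ord_n(q)) = 1, every f_i ⊙ g_j is irreducible over F_q, so this is the complete factorization of Φ_{mn} over F_q. -/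
/-!
The roots of `Φ_{mn}` are exactly the products `αβ` of a primitive `m`-th root `α` and a
primitive `n`-th root `β`, each obtained once since `m` and `n` are coprime; grouping them by the
factors of `Φ_m` and `Φ_n` that `α` and `β` are roots of gives the factorization.
Over `F_q` every irreducible factor of `Φ_k` has degree `ord_k(q)`, and conversely a factor of that
degree is irreducible. The factor `f_i ⊙ g_j` of `Φ_{mn}` has degree `ord_m(q) · ord_n(q)`,
which is `lcm(ord_m(q), ord_n(q)) = ord_{mn}(q)` when the orders are coprime.
-/

open Polynomial

theorem IsPrimitiveRoot.mul_of_coprime {M : Type*} [CommMonoid M] {α β : M} {m n : ℕ}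
    (hα : IsPrimitiveRoot α m) (hβ : IsPrimitiveRoot β n) (hmn : m.Coprime n) :
    IsPrimitiveRoot (α * β) (m * n) := by
  rw [hα.eq_orderOf, hβ.eq_orderOf] at hmn ⊢
  rw [← (Commute.all α β).orderOf_mul_eq_mul_orderOf_of_coprime hmn]
  exact IsPrimitiveRoot.orderOf _

theorem eq_of_mul_eq_mul_of_pow_eq_one {G : Type*} [CommGroupWithZero G] {α α' β β' : G}
    {m n : ℕ} (hmn : m.Coprime n) (hα : α ^ m = 1) (hα' : α' ^ m = 1) (hβ : β ^ n = 1)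
    (hβ' : β' ^ n = 1) (hα'0 : α' ≠ 0) (hβ0 : β ≠ 0) (h : α * β = α' * β') :
    α = α' := by
  have hquot : α / α' = β' / β := by rw [div_eq_div_iff hα'0 hβ0, h, mul_comm]
  have : (α / α') ^ m.gcd n = 1 :=
    pow_gcd_eq_one.mpr
      ⟨by rw [div_pow, hα, hα', div_one], by rw [hquot, div_pow, hβ, hβ', div_one]⟩
  rwa [hmn, pow_one, div_eq_one_iff_eq hα'0] at this

theorem map_mul_product_primitiveRoots {K : Type*} [Field K] {m n : ℕ} {ζ ξ : K}
    (hmn : m.Coprime n) (hζ : IsPrimitiveRoot ζ m) (hξ : IsPrimitiveRoot ξ n) :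
    ((primitiveRoots m K).val ×ˢ (primitiveRoots n K).val).map (fun p => p.1 * p.2) =
      (primitiveRoots (m * n) K).val := by
  obtain rfl | hm := m.eq_zero_or_pos
  · simp
  obtain rfl | hn := n.eq_zero_or_pos
  · simp
  have hprim : ∀ p ∈ (primitiveRoots m K).val ×ˢ (primitiveRoots n K).val,
      IsPrimitiveRoot p.1 m ∧ IsPrimitiveRoot p.2 n := fun p hp => by
    simpa [Multiset.mem_product, mem_primitiveRoots hm, mem_primitiveRoots hn] using hp
  have hnodup : (((primitiveRoots m K).val ×ˢ (primitiveRoots n K).val).map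
      (fun p => p.1 * p.2)).Nodup := by
    refine Multiset.Nodup.map_on (fun p hp p' hp' h => ?_)
      ((primitiveRoots m K).nodup.product (primitiveRoots n K).nodup)
    obtain ⟨hp1, hp2⟩ := hprim p hp
    obtain ⟨hp1', hp2'⟩ := hprim p' hp'
    have h1 : p.1 = p'.1 := eq_of_mul_eq_mul_of_pow_eq_one hmn hp1.pow_eq_one hp1'.pow_eq_one
      hp2.pow_eq_one hp2'.pow_eq_one (hp1'.ne_zero hm.ne') (hp2.ne_zero hn.ne') h
    refine Prod.ext h1 (mul_left_cancel₀ (hp1.ne_zero hm.ne') ?_)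
    rw [h, h1]
  refine Multiset.eq_of_le_of_card_le ((Multiset.le_iff_subset hnodup).mpr fun x hx => ?_) ?_
  · obtain ⟨p, hp, rfl⟩ := Multiset.mem_map.mp hx
    rw [Finset.mem_val, mem_primitiveRoots (Nat.mul_pos hm hn)]
    exact (hprim p hp).1.mul_of_coprime (hprim p hp).2 hmn
  · simp only [Multiset.card_map, Multiset.card_product, Finset.card_val]
    rw [(hζ.mul_of_coprime hξ hmn).card_primitiveRoots, hζ.card_primitiveRoots,
      hξ.card_primitiveRoots, Nat.totient_mul hmn]

theorem Multiset.prod_map_finsetSum {ι α M : Type*} [CommMonoid M] (s : Finset ι)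
    (A : ι → Multiset α) (φ : α → M) :
    ((∑ i ∈ s, A i).map φ).prod = ∏ i ∈ s, ((A i).map φ).prod := by
  rw [← Multiset.prod_sum, ← Multiset.coe_mapAddMonoidHom, map_sum]

section CompMul

variable {F : Type*} [Field F]

theorem acRoots_prod {ι : Type*} (s : Finset ι) (f : ι → F[X]) (hf : ∀ i ∈ s, f i ≠ 0) :
    acRoots F (∏ i ∈ s, f i) = ∑ i ∈ s, acRoots F (f i) := by
  rw [acRoots, Polynomial.map_prod, roots_prod _ _ (Finset.prod_ne_zero_iff.mpr
    fun i hi => Polynomial.map_ne_zero (hf i hi))]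
  rfl

theorem compMul_prod_prod {ι κ : Type*} {s : Finset ι} {t : Finset κ} {f : ι → F[X]}
    {g : κ → F[X]} (hf : ∀ i ∈ s, f i ≠ 0) (hg : ∀ j ∈ t, g j ≠ 0) :
    compMul F (∏ i ∈ s, f i) (∏ j ∈ t, g j) =
      ∏ i ∈ s, ∏ j ∈ t, compMul F (f i) (g j) := by
  simp only [compMul, Multiset.prod_bind, acRoots_prod s f hf, acRoots_prod t g hg,
    Multiset.prod_map_finsetSum]
  refine Finset.prod_congr rfl fun i _ => ?_
  simp only [Multiset.prod_map_prod]

theorem compMul_eq_prod_X_sub_C (f g : F[X]) :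
    compMul F f g =
      (((acRoots F f ×ˢ acRoots F g).map fun p => p.1 * p.2).map fun a => X - C a).prod := by
  rw [Multiset.map_map, Multiset.prod_map_product_eq_prod_prod, compMul, Multiset.prod_bind]
  rfl

theorem acRoots_cyclotomic (k : ℕ) [NeZero (k : F)] :
    acRoots F (cyclotomic k F) = (primitiveRoots k (AlgebraicClosure F)).val := by
  have : NeZero (k : AlgebraicClosure F) :=
    ‹NeZero (k : F)›.of_injective (algebraMap F (AlgebraicClosure F)).injective
  rw [acRoots, map_cyclotomic, cyclotomic.roots_eq_primitiveRoots_val]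

theorem map_cyclotomic_mul_eq_compMul {m n : ℕ} (hmn : m.Coprime n) [NeZero (m : F)]
    [NeZero (n : F)] :
    (cyclotomic (m * n) F).map (algebraMap F (AlgebraicClosure F)) =
      compMul F (cyclotomic m F) (cyclotomic n F) := by
  obtain ⟨ζ, hζ⟩ := HasEnoughRootsOfUnity.exists_primitiveRoot (AlgebraicClosure F) m
  obtain ⟨ξ, hξ⟩ := HasEnoughRootsOfUnity.exists_primitiveRoot (AlgebraicClosure F) n
  rw [map_cyclotomic, cyclotomic_eq_prod_X_sub_primitiveRoots (hζ.mul_of_coprime hξ hmn),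
    compMul_eq_prod_X_sub_C, acRoots_cyclotomic, acRoots_cyclotomic,
    map_mul_product_primitiveRoots hmn hζ hξ]
  rfl

end CompMul

section FiniteField

variable {F : Type*} [Field F] [Fintype F] {k : ℕ}

theorem natCast_ne_zero_of_coprime_card_s12 (hk : k.Coprime (Fintype.card F)) : (k : F) ≠ 0 := by
  intro h
  have hchar_k : ringChar F ∣ k := (CharP.cast_eq_zero_iff F (ringChar F) k).mp h
  have hchar_card : ringChar F ∣ Fintype.card F :=
    (CharP.cast_eq_zero_iff F (ringChar F) _).mp (FiniteField.cast_card_eq_zero F)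
  exact CharP.ringChar_ne_one
    (Nat.Coprime.eq_one_of_dvd (Nat.Coprime.coprime_dvd_left hchar_k hk) hchar_card)

theorem irreducible_iff_natDegree_eq_orderOf_of_dvd_cyclotomic
    (hk : k.Coprime (Fintype.card F)) {P : F[X]} (hP : P ∣ cyclotomic k F) :
    Irreducible P ↔ P.natDegree = orderOf (Fintype.card F : ZMod k) := by
  obtain ⟨f, hp, hcard⟩ := FiniteField.card F (ringChar F)
  have : Fact (ringChar F).Prime := ⟨hp⟩
  have hpk : (ringChar F).Coprime k :=
    (Nat.Coprime.coprime_dvd_right (dvd_pow_self _ f.ne_zero) (hcard ▸ hk)).symm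
  have hord : orderOf (Fintype.card F : ZMod k) =
      orderOf (ZMod.unitOfCoprime _ (hpk.pow_left f)) := by
    rw [← orderOf_units, ZMod.coe_unitOfCoprime, hcard]
  rw [hord]
  exact ⟨natDegree_of_dvd_cyclotomic_of_irreducible hcard hpk hP,
    irreducible_of_dvd_cyclotomic_of_natDegree hcard hpk hP⟩

end FiniteField

theorem ZMod.orderOf_natCast_mul {m n : ℕ} (hmn : m.Coprime n) (a : ℕ) :
    orderOf (a : ZMod (m * n)) = (orderOf (a : ZMod m)).lcm (orderOf (a : ZMod n)) := by
  rw [← orderOf_injective (ZMod.chineseRemainder hmn).toMonoidHom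
    (ZMod.chineseRemainder hmn).injective, Prod.orderOf]
  simp

theorem stmt12_general (Fq : Type*) [Field Fq] [Fintype Fq] (m n : ℕ)
    (hmn : Nat.Coprime m n)
    (hq : Nat.Coprime (m * n) (Fintype.card Fq))
    (I J : ℕ) (f : Fin I → Fq[X]) (g : Fin J → Fq[X])
    (hfi : ∀ i, Irreducible (f i))
    (hgi : ∀ j, Irreducible (g j))
    (hΦm : cyclotomic m Fq = ∏ i, f i) (hΦn : cyclotomic n Fq = ∏ j, g j) :
    ((cyclotomic (m * n) Fq).map (algebraMap Fq (AlgebraicClosure Fq)) =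
        ∏ i, ∏ j, compMul Fq (f i) (g j)) ∧
    (Nat.Coprime (orderOf ((Fintype.card Fq : ZMod m))) (orderOf ((Fintype.card Fq : ZMod n))) →
      ∀ i j (P : Fq[X]),
        P.map (algebraMap Fq (AlgebraicClosure Fq)) = compMul Fq (f i) (g j) →
        Irreducible P) := by
  have hqm : m.Coprime (Fintype.card Fq) := hq.coprime_mul_right
  have hqn : n.Coprime (Fintype.card Fq) := hq.coprime_mul_left
  have : NeZero (m : Fq) := ⟨natCast_ne_zero_of_coprime_card_s12 hqm⟩
  have : NeZero (n : Fq) := ⟨natCast_ne_zero_of_coprime_card_s12 hqn⟩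
  have hΦmn : (cyclotomic (m * n) Fq).map (algebraMap Fq (AlgebraicClosure Fq)) =
      ∏ i, ∏ j, compMul Fq (f i) (g j) := by
    rw [map_cyclotomic_mul_eq_compMul hmn, hΦm, hΦn,
      compMul_prod_prod (fun i _ => (hfi i).ne_zero) (fun j _ => (hgi j).ne_zero)]
  refine ⟨hΦmn, fun hord i j P hP => ?_⟩
  have hP_dvd : P ∣ cyclotomic (m * n) Fq := by
    rw [← map_dvd_map' (algebraMap Fq (AlgebraicClosure Fq)), hP, hΦmn]
    exact (Finset.dvd_prod_of_mem (compMul Fq (f i) <| g ·) (Finset.mem_univ j)).trans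
      (Finset.dvd_prod_of_mem (fun i => ∏ j, compMul Fq (f i) (g j)) (Finset.mem_univ i))
  have hf_deg := (irreducible_iff_natDegree_eq_orderOf_of_dvd_cyclotomic hqm
    (hΦm ▸ Finset.dvd_prod_of_mem f (Finset.mem_univ i))).mp (hfi i)
  have hg_deg := (irreducible_iff_natDegree_eq_orderOf_of_dvd_cyclotomic hqn
    (hΦn ▸ Finset.dvd_prod_of_mem g (Finset.mem_univ j))).mp (hgi j)
  rw [irreducible_iff_natDegree_eq_orderOf_of_dvd_cyclotomic hq hP_dvd,
    ← natDegree_map (algebraMap Fq (AlgebraicClosure Fq)), hP, natDegree_compMul, hf_deg,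
    hg_deg, ZMod.orderOf_natCast_mul hmn, hord.lcm_eq_mul]

theorem stmt12 (Fq : Type*) [Field Fq] [Fintype Fq] (m n : ℕ)
    (hm : 0 < m) (hn : 0 < n) (hmn : Nat.Coprime m n)
    (hq : Nat.Coprime (m * n) (Fintype.card Fq))
    (I J : ℕ) (f : Fin I → Fq[X]) (g : Fin J → Fq[X])
    (hfm : ∀ i, (f i).Monic) (hfi : ∀ i, Irreducible (f i))
    (hgm : ∀ j, (g j).Monic) (hgi : ∀ j, Irreducible (g j))
    (hΦm : cyclotomic m Fq = ∏ i, f i) (hΦn : cyclotomic n Fq = ∏ j, g j) :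
    ((cyclotomic (m * n) Fq).map (algebraMap Fq (AlgebraicClosure Fq)) =
        ∏ i, ∏ j, compMul Fq (f i) (g j)) ∧
    (Nat.Coprime (orderOf ((Fintype.card Fq : ZMod m))) (orderOf ((Fintype.card Fq : ZMod n))) →
      ∀ i j (P : Fq[X]),
        P.map (algebraMap Fq (AlgebraicClosure Fq)) = compMul Fq (f i) (g j) →
        Irreducible P) :=
  stmt12_general Fq m n hmn hq I J f g hfi hgi hΦm hΦn
end

section
/- Let q be an odd prime power, r ≥ 3 odd with gcd(r, q) = 1, d_r = ord_r(q), and K = v_2(q^{d_r} − 1). Then for every n with 1 ≤ n ≤ K, the multiplicative order of q modulo 2^n r equals d_r. Consequently every monic irreducible factor of Φ_{2^n r} over F_q has degree d_r for n ≤ K. -/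
/-! The order `d` of `q` modulo `r` gives `r ∣ q ^ d - 1`, and `n ≤ v₂(q ^ d - 1)` gives
`2 ^ n ∣ q ^ d - 1`; as `r` is odd, `2 ^ n * r ∣ q ^ d - 1`. So the order of `q` modulo
`2 ^ n * r` divides `d`, and it is a multiple of `d` since reduction modulo `r` maps it onto
the order modulo `r`. The degree of an irreducible factor of `Φ_m` over `𝔽_q` is the order of
`q` modulo `m`. -/

open Polynomial

lemma ZMod.natCast_pow_eq_one_iff_dvd_pow_sub_one {q M k : ℕ} (hq : q ≠ 0) :
    (q : ZMod M) ^ k = 1 ↔ M ∣ q ^ k - 1 := by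
  rw [← Nat.cast_pow, ← Nat.cast_one, ZMod.natCast_eq_natCast_iff, Nat.ModEq.comm,
    Nat.modEq_iff_dvd' (Nat.one_le_pow _ _ (Nat.pos_of_ne_zero hq))]

lemma ZMod.orderOf_natCast_eq_of_dvd_pow_orderOf_sub_one {q m M : ℕ} (hq : q ≠ 0)
    (hmM : m ∣ M) (hM : M ∣ q ^ orderOf (q : ZMod m) - 1) :
    orderOf (q : ZMod M) = orderOf (q : ZMod m) :=
  Nat.dvd_antisymm
    (orderOf_dvd_of_pow_eq_one ((natCast_pow_eq_one_iff_dvd_pow_sub_one hq).2 hM))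
    (by simpa using orderOf_map_dvd (ZMod.castHom hmM (ZMod m)).toMonoidHom (q : ZMod M))

theorem Polynomial.natDegree_eq_orderOf_card_of_dvd_cyclotomic {K : Type*} [Field K] [Fintype K]
    {n : ℕ} {P : K[X]} (hn : n.Coprime (Fintype.card K)) (hP : P ∣ cyclotomic n K)
    (hPirr : Irreducible P) : P.natDegree = orderOf (Fintype.card K : ZMod n) := by
  obtain ⟨f, hp, hK⟩ := FiniteField.card K (ringChar K)
  have : Fact (ringChar K).Prime := ⟨hp⟩
  have hpn : (ringChar K).Coprime n :=
    hn.symm.coprime_dvd_left (hK ▸ dvd_pow_self _ f.ne_zero)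
  rw [natDegree_of_dvd_cyclotomic_of_irreducible hK hpn hP hPirr, ← orderOf_units,
    ZMod.coe_unitOfCoprime, hK]

theorem stmt15_general (Fq : Type*) [Field Fq] [Fintype Fq] (hodd : Odd (Fintype.card Fq))
    (r : ℕ) (hrodd : Odd r) (hcop : Nat.Coprime r (Fintype.card Fq))
    (d K : ℕ) (hd : d = orderOf ((Fintype.card Fq : ZMod r)))
    (hK : K = padicValNat 2 ((Fintype.card Fq) ^ d - 1)) :
    ∀ n : ℕ, 1 ≤ n → n ≤ K →
      orderOf ((Fintype.card Fq : ZMod (2 ^ n * r))) = d ∧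
      ∀ h : Fq[X], h.Monic → Irreducible h → h ∣ cyclotomic (2 ^ n * r) Fq →
        h.natDegree = d := by
  intro n _ hnK
  set q := Fintype.card Fq
  have hq : q ≠ 0 := Fintype.card_ne_zero
  have hr_dvd : r ∣ q ^ d - 1 :=
    (ZMod.natCast_pow_eq_one_iff_dvd_pow_sub_one hq).1 (hd ▸ pow_orderOf_eq_one _)
  have h2_dvd : 2 ^ n ∣ q ^ d - 1 := (pow_dvd_pow 2 hnK).trans (hK ▸ pow_padicValNat_dvd)
  have hm_dvd : 2 ^ n * r ∣ q ^ d - 1 :=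
    ((Nat.coprime_two_left.2 hrodd).pow_left n).mul_dvd_of_dvd_of_dvd h2_dvd hr_dvd
  have hord : orderOf (q : ZMod (2 ^ n * r)) = d := by
    subst hd
    exact ZMod.orderOf_natCast_eq_of_dvd_pow_orderOf_sub_one hq (dvd_mul_left r _) hm_dvd
  have hm_cop : (2 ^ n * r).Coprime q := ((Nat.coprime_two_left.2 hodd).pow_left n).mul_left hcop
  exact ⟨hord, fun h _ hirr hdvd ↦
    hord ▸ natDegree_eq_orderOf_card_of_dvd_cyclotomic hm_cop hdvd hirr⟩

theorem stmt15 (Fq : Type*) [Field Fq] [Fintype Fq] (hodd : Odd (Fintype.card Fq))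
    (r : ℕ) (hr : 3 ≤ r) (hrodd : Odd r) (hcop : Nat.Coprime r (Fintype.card Fq))
    (d K : ℕ) (hd : d = orderOf ((Fintype.card Fq : ZMod r)))
    (hK : K = padicValNat 2 ((Fintype.card Fq) ^ d - 1)) :
    ∀ n : ℕ, 1 ≤ n → n ≤ K →
      orderOf ((Fintype.card Fq : ZMod (2 ^ n * r))) = d ∧
      ∀ h : Fq[X], h.Monic → Irreducible h → h ∣ cyclotomic (2 ^ n * r) Fq →
        h.natDegree = d :=
  stmt15_general Fq hodd r hrodd hcop d K hd hK
end

section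
/- Let q be an odd prime power, r ≥ 3 odd with gcd(r,q) = 1, d_r = ord_r(q), K = v_2(q^{d_r} − 1), and assume q ≡ 1 (mod 4) if d_r is odd. If h is a monic irreducible factor of Φ_{2^K r} over F_q, then for every n > K the polynomial h(x^{2^{n−K}}) is irreducible over F_q, and Φ_{2^n r}(x) = ∏_i h_i(x^{2^{n−K}}) is the complete factorization of Φ_{2^n r} over F_q, where Φ_{2^K r} = ∏_i h_i is the factorization into monic irreducibles. -/
/-! Over `𝔽_q`, every irreducible factor of `Φ_m` (with `m` prime to `q`) has degree `ord_m q`.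
Since `Φ_{2^n r}(x) = Φ_{2^K r}(x^{2^(n-K)})`, the factorization is immediate, and the irreducibility
of `h(x^{2^(n-K)})` reduces to `ord_{2^n r} q = 2^(n-K) d`. This is lifting the exponent at `2`:
the hypothesis on `q mod 4` gives `4 ∣ q^d - 1`, hence `v_2(q^(ds) - 1) = K + v_2(s)`. -/

open Polynomial

theorem Nat.emultiplicity_two_pow_sub_one {x : ℕ} (hx : 4 ∣ x - 1) (hx1 : 1 < x) (s : ℕ) :
    emultiplicity 2 (x ^ s - 1) = padicValNat 2 (x - 1) + emultiplicity 2 s := by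
  have : Fact (Nat.Prime 2) := ⟨Nat.prime_two⟩
  have hcast : ((x ^ s - 1 : ℕ) : ℤ) = (x : ℤ) ^ s - 1 := by
    push_cast [Nat.cast_sub (Nat.one_le_pow s x (by omega))]; rfl
  have hcast₁ : ((x - 1 : ℕ) : ℤ) = (x : ℤ) - 1 := by omega
  have hx4 : (4 : ℤ) ∣ (x : ℤ) - 1 := by
    rw [← hcast₁]; exact_mod_cast hx
  have hLTE := Int.two_pow_sub_pow' s hx4 (by omega)
  rw [one_pow, ← hcast, ← hcast₁] at hLTE
  rw [padicValNat_eq_emultiplicity (by omega)]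
  exact_mod_cast hLTE

theorem Nat.two_pow_add_dvd_pow_sub_one_iff {x : ℕ} (hx : 4 ∣ x - 1) (hx1 : 1 < x) (k s : ℕ) :
    2 ^ (padicValNat 2 (x - 1) + k) ∣ x ^ s - 1 ↔ 2 ^ k ∣ s := by
  rw [pow_dvd_iff_le_emultiplicity, pow_dvd_iff_le_emultiplicity,
    emultiplicity_two_pow_sub_one hx hx1, Nat.cast_add]
  exact WithTop.add_le_add_iff_left (WithTop.natCast_ne_top _)

theorem Nat.four_dvd_pow_sub_one {q d : ℕ} (hq : Odd q) (h : Even d ∨ q % 4 = 1) :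
    4 ∣ q ^ d - 1 := by
  rcases h with ⟨e, rfl⟩ | h
  · rw [← two_mul, pow_mul]
    exact (dvd_trans (by norm_num) (Nat.eight_dvd_sq_sub_one_of_odd hq)).trans
      (Nat.sub_one_dvd_pow_sub_one _ e)
  · exact (show 4 ∣ q - 1 by omega).trans (Nat.sub_one_dvd_pow_sub_one q d)

namespace ZMod

theorem natCast_pow_eq_one_iff {q : ℕ} (hq : 0 < q) (M t : ℕ) :
    (q : ZMod M) ^ t = 1 ↔ M ∣ q ^ t - 1 := by
  rw [← Nat.cast_pow, ← Nat.cast_one, eq_comm, ZMod.natCast_eq_natCast_iff,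
    Nat.modEq_iff_dvd' (Nat.one_le_pow _ _ hq)]

theorem orderOf_unitOfCoprime {x n : ℕ} (h : x.Coprime n) :
    orderOf (unitOfCoprime x h) = orderOf (x : ZMod n) := by
  rw [← orderOf_units, coe_unitOfCoprime]

theorem orderOf_natCast_pos {x n : ℕ} [NeZero n] (h : x.Coprime n) :
    0 < orderOf (x : ZMod n) :=
  orderOf_unitOfCoprime h ▸ orderOf_pos _

theorem orderOf_natCast_two_pow_mul {q r d : ℕ} (hq : 1 < q) (hr : Odd r)
    (hd : orderOf (q : ZMod r) = d) (hd0 : 0 < d) (h4 : 4 ∣ q ^ d - 1) (k : ℕ) :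
    orderOf (q : ZMod (2 ^ (padicValNat 2 (q ^ d - 1) + k) * r)) = 2 ^ k * d := by
  set M := 2 ^ (padicValNat 2 (q ^ d - 1) + k)
  have hcop : Nat.Coprime M r := Nat.Coprime.pow_left _ (Nat.coprime_two_left.mpr hr)
  refine Nat.dvd_right_iff_eq.mp fun t => ?_
  have hr_iff : r ∣ q ^ t - 1 ↔ d ∣ t := by
    rw [← hd, orderOf_dvd_iff_pow_eq_one, natCast_pow_eq_one_iff (by omega)]
  have hsplit : M * r ∣ q ^ t - 1 ↔ M ∣ q ^ t - 1 ∧ r ∣ q ^ t - 1 :=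
    ⟨fun h => ⟨dvd_of_mul_right_dvd h, dvd_of_mul_left_dvd h⟩,
      fun h => hcop.mul_dvd_of_dvd_of_dvd h.1 h.2⟩
  rw [orderOf_dvd_iff_pow_eq_one, natCast_pow_eq_one_iff (by omega), hsplit, hr_iff]
  by_cases hdt : d ∣ t
  · obtain ⟨s, rfl⟩ := hdt
    rw [pow_mul, Nat.two_pow_add_dvd_pow_sub_one_iff h4 (Nat.one_lt_pow hd0.ne' hq),
      mul_comm d s, Nat.mul_dvd_mul_iff_right hd0, and_iff_left (dvd_mul_left d s)]
  · exact iff_of_false (fun h => hdt h.2) (fun h => hdt (dvd_of_mul_left_dvd h))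

end ZMod

namespace Polynomial

theorem expand_prime_pow_cyclotomic {p n : ℕ} (hp : p.Prime) (hdiv : p ∣ n)
    (R : Type*) [CommRing R] (k : ℕ) :
    expand R (p ^ k) (cyclotomic n R) = cyclotomic (n * p ^ k) R := by
  induction k with
  | zero => simp
  | succ k ih =>
    rw [pow_succ', ← expand_expand, ih,
      cyclotomic_expand_eq_cyclotomic hp (hdiv.trans (dvd_mul_right n _))]
    congr 1
    ring

section FiniteField

variable {K : Type*} [Field K] [Fintype K] {n : ℕ} {P : K[X]}

theorem _root_.FiniteField.exists_card_eq_prime_pow_of_coprime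
    (hn : n.Coprime (Fintype.card K)) :
    ∃ p f : ℕ, p.Prime ∧ Fintype.card K = p ^ f ∧ p.Coprime n := by
  obtain ⟨f, hp, hcard⟩ := FiniteField.card K (ringChar K)
  exact ⟨ringChar K, f, hp, hcard,
    Nat.Coprime.coprime_dvd_left (dvd_pow_self _ f.ne_zero) (hcard ▸ hn.symm)⟩

theorem natDegree_eq_orderOf_of_dvd_cyclotomic (hn : n.Coprime (Fintype.card K))
    (hP : P ∣ cyclotomic n K) (hPirr : Irreducible P) :
    P.natDegree = orderOf (Fintype.card K : ZMod n) := by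
  obtain ⟨p, f, hp, hcard, hpn⟩ := FiniteField.exists_card_eq_prime_pow_of_coprime hn
  have : Fact p.Prime := ⟨hp⟩
  rw [natDegree_of_dvd_cyclotomic_of_irreducible hcard hpn hP hPirr,
    ZMod.orderOf_unitOfCoprime, ← hcard]

theorem irreducible_of_dvd_cyclotomic_of_natDegree_eq_orderOf
    (hn : n.Coprime (Fintype.card K)) (hP : P ∣ cyclotomic n K)
    (hPdeg : P.natDegree = orderOf (Fintype.card K : ZMod n)) : Irreducible P := by
  obtain ⟨p, f, hp, hcard, hpn⟩ := FiniteField.exists_card_eq_prime_pow_of_coprime hn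
  have : Fact p.Prime := ⟨hp⟩
  refine irreducible_of_dvd_cyclotomic_of_natDegree hcard hpn hP ?_
  rw [hPdeg, ZMod.orderOf_unitOfCoprime, ← hcard]

end FiniteField

end Polynomial

theorem stmt16_general (Fq : Type*) [Field Fq] [Fintype Fq] (hodd : Odd (Fintype.card Fq))
    (r : ℕ) (hrodd : Odd r) (hcop : Nat.Coprime r (Fintype.card Fq))
    (d K : ℕ) (hd : d = orderOf ((Fintype.card Fq : ZMod r)))
    (hK : K = padicValNat 2 ((Fintype.card Fq) ^ d - 1))
    (hmod4 : Odd d → Fintype.card Fq % 4 = 1)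
    (I : ℕ) (h : Fin I → Fq[X])
    (hirr : ∀ i, Irreducible (h i))
    (hfact : cyclotomic (2 ^ K * r) Fq = ∏ i, h i) :
    ∀ n : ℕ, K < n →
      (∀ i, Irreducible ((h i).comp (X ^ 2 ^ (n - K)))) ∧
      cyclotomic (2 ^ n * r) Fq = ∏ i, (h i).comp (X ^ 2 ^ (n - K)) := by
  intro n hn
  obtain ⟨k, rfl⟩ : ∃ k, n = K + k := ⟨n - K, by omega⟩
  rw [Nat.add_sub_cancel_left]
  set q := Fintype.card Fq
  have : NeZero r := ⟨hrodd.pos.ne'⟩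
  have hd0 : 0 < d := hd ▸ ZMod.orderOf_natCast_pos hcop.symm
  have h4 : 4 ∣ q ^ d - 1 :=
    Nat.four_dvd_pow_sub_one hodd ((Nat.even_or_odd d).imp_right hmod4)
  have hK1 : 1 ≤ K := by
    have : Fact (Nat.Prime 2) := ⟨Nat.prime_two⟩
    have hqd : 1 < q ^ d := Nat.one_lt_pow hd0.ne' Fintype.one_lt_card
    exact hK ▸ one_le_padicValNat_of_dvd (by omega) (dvd_trans (by norm_num) h4)
  have hord (j : ℕ) : orderOf (q : ZMod (2 ^ (K + j) * r)) = 2 ^ j * d :=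
    hK ▸ ZMod.orderOf_natCast_two_pow_mul Fintype.one_lt_card hrodd hd.symm hd0 h4 j
  have hcopm (m : ℕ) : (2 ^ m * r).Coprime q :=
    (Nat.Coprime.pow_left m (Nat.coprime_two_left.mpr hodd)).mul_left hcop
  have hfactor : cyclotomic (2 ^ (K + k) * r) Fq = ∏ i, (h i).comp (X ^ 2 ^ k) := by
    rw [show 2 ^ (K + k) * r = 2 ^ K * r * 2 ^ k by ring,
      ← expand_prime_pow_cyclotomic Nat.prime_two
        ((dvd_pow_self 2 (by omega)).mul_right r), hfact, map_prod]
    rfl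
  refine ⟨fun i => ?_, hfactor⟩
  have hdeg : (h i).natDegree = d := by
    rw [natDegree_eq_orderOf_of_dvd_cyclotomic (hcopm K)
      (hfact ▸ Finset.dvd_prod_of_mem h (Finset.mem_univ i)) (hirr i)]
    simpa using hord 0
  refine irreducible_of_dvd_cyclotomic_of_natDegree_eq_orderOf (hcopm (K + k))
    (hfactor ▸ Finset.dvd_prod_of_mem _ (Finset.mem_univ i)) ?_
  rw [natDegree_comp, natDegree_X_pow, hdeg, hord k, mul_comm]

theorem stmt16 (Fq : Type*) [Field Fq] [Fintype Fq] (hodd : Odd (Fintype.card Fq))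
    (r : ℕ) (hr : 3 ≤ r) (hrodd : Odd r) (hcop : Nat.Coprime r (Fintype.card Fq))
    (d K : ℕ) (hd : d = orderOf ((Fintype.card Fq : ZMod r)))
    (hK : K = padicValNat 2 ((Fintype.card Fq) ^ d - 1))
    (hmod4 : Odd d → Fintype.card Fq % 4 = 1)
    (I : ℕ) (h : Fin I → Fq[X])
    (hmon : ∀ i, (h i).Monic) (hirr : ∀ i, Irreducible (h i))
    (hfact : cyclotomic (2 ^ K * r) Fq = ∏ i, h i) :
    ∀ n : ℕ, K < n →
      (∀ i, Irreducible ((h i).comp (X ^ 2 ^ (n - K)))) ∧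
      cyclotomic (2 ^ n * r) Fq = ∏ i, (h i).comp (X ^ 2 ^ (n - K)) :=
  stmt16_general Fq hodd r hrodd hcop d K hd hK hmod4 I h hirr hfact
end

section
/- Let q ≡ 3 (mod 4) be a prime power, write q = 2^A m − 1 with A ≥ 2 and m odd. For 2 ≤ n ≤ A, Φ_{2^n}(x) = ∏_{u ∈ U_n} (x^2 + (u + u^{−1}) x + 1) is the factorization of Φ_{2^n} into 2^{n−2} monic irreducible quadratic trinomials over F_q, where U_n is the set of primitive 2^n-th roots of unity in F_{q^2} (taking one from each conjugate pair). -/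
/-!
Since `2 ^ n ∣ q + 1`, every primitive `2 ^ n`-th root of unity `u` satisfies `u ^ q = u⁻¹`, so the
Frobenius fixes `u + u⁻¹`, which therefore lies in `F_q`. Writing the primitive roots as the odd
powers of one of them and pairing each with its inverse splits `Φ_{2^n}` into the quadratics
`(X + u)(X + u⁻¹) = X ^ 2 + (u + u⁻¹) X + 1`. A root in `F_q` of such a factor would be a primitive
`2 ^ n`-th root of unity in `F_q`, and a suitable power of it would be a square root of `-1`, which
does not exist when `q ≡ 3 (mod 4)`.
-/

open Polynomial Finset

theorem add_inv_eq_add_inv_iff {K : Type*} [Field K] {a b : K} (ha : a ≠ 0) (hb : b ≠ 0) :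
    a + a⁻¹ = b + b⁻¹ ↔ a = b ∨ a = b⁻¹ := by
  refine ⟨fun h ↦ ?_, by rintro (rfl | rfl) <;> simp [add_comm]⟩
  have : (a - b) * (a - b⁻¹) = 0 := by
    calc (a - b) * (a - b⁻¹) = a * a - a * (b + b⁻¹) + b * b⁻¹ := by ring
      _ = 0 := by rw [← h, mul_inv_cancel₀ hb, mul_add, mul_inv_cancel₀ ha]; ring
  simpa [sub_eq_zero] using this

theorem X_add_C_mul_X_add_C_inv {K : Type*} [Field K] {u : K} (hu : u ≠ 0) :
    (X + C u) * (X + C u⁻¹) = X ^ 2 + C (u + u⁻¹) * X + 1 := by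
  rw [C_add, ← C_1, ← mul_inv_cancel₀ hu, C_mul]
  ring

namespace IsPrimitiveRoot

theorem odd_pow {M : Type*} [CommMonoid M] {n : ℕ} {ζ : M} (hζ : IsPrimitiveRoot ζ (2 ^ n))
    {k : ℕ} (hk : Odd k) : IsPrimitiveRoot (ζ ^ k) (2 ^ n) :=
  hζ.pow_of_coprime k ((Nat.coprime_two_right.mpr hk).pow_right n)

section CommRing

variable {R : Type*} [CommRing R] [IsDomain R] {n : ℕ} {ζ : R}

theorem pow_two_pow_pred_eq_neg_one (hζ : IsPrimitiveRoot ζ (2 ^ n)) (hn : 1 ≤ n) :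
    ζ ^ 2 ^ (n - 1) = -1 :=
  (hζ.pow (by positivity) (by rw [← pow_succ, Nat.sub_add_cancel hn])).eq_neg_one_of_two_right

theorem neg_of_two_pow (hζ : IsPrimitiveRoot ζ (2 ^ n)) (hn : 2 ≤ n) :
    IsPrimitiveRoot (-ζ) (2 ^ n) := by
  have h : -ζ = ζ ^ (2 ^ (n - 1) + 1) := by
    rw [pow_succ, hζ.pow_two_pow_pred_eq_neg_one (by omega), neg_one_mul]
  rw [h]
  exact hζ.odd_pow ((Nat.even_pow.mpr ⟨even_two, by omega⟩).add_one)

theorem cyclotomic_two_pow_eq_prod_odd_pow (hζ : IsPrimitiveRoot ζ (2 ^ n)) (hn : 1 ≤ n) :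
    cyclotomic (2 ^ n) R = ∏ j ∈ range (2 ^ (n - 1)), (X - C (ζ ^ (2 * j + 1))) := by
  classical
  have h2n : 2 ^ n = 2 ^ (n - 1) * 2 := by rw [← pow_succ, Nat.sub_add_cancel hn]
  have hinj : Set.InjOn (fun j ↦ ζ ^ (2 * j + 1)) (range (2 ^ (n - 1))) := by
    intro i hi j hj hij
    simp only [coe_range, Set.mem_Iio] at hi hj
    have := hζ.pow_inj (by omega) (by omega) hij
    omega
  have himage :
      (range (2 ^ (n - 1))).image (fun j ↦ ζ ^ (2 * j + 1)) = primitiveRoots (2 ^ n) R := by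
    refine eq_of_subset_of_card_le (fun x hx ↦ ?_) ?_
    · obtain ⟨j, -, rfl⟩ := mem_image.mp hx
      exact (mem_primitiveRoots (by positivity)).mpr (hζ.odd_pow (odd_two_mul_add_one j))
    · rw [hζ.card_primitiveRoots, Nat.totient_prime_pow Nat.prime_two (by omega),
        card_image_of_injOn hinj, card_range, Nat.add_one_sub_one, mul_one]
  rw [cyclotomic_eq_prod_X_sub_primitiveRoots hζ, ← himage, prod_image hinj]

end CommRing

section Field

variable {K : Type*} [Field K] {n : ℕ} {ζ : K}

theorem inv_odd_pow_eq (hζ : IsPrimitiveRoot ζ (2 ^ n)) (hn : 1 ≤ n) {j : ℕ}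
    (hj : j < 2 ^ (n - 1)) :
    (ζ ^ (2 * j + 1))⁻¹ = ζ ^ (2 * (2 ^ (n - 1) - 1 - j) + 1) := by
  have h2n : 2 ^ n = 2 ^ (n - 1) * 2 := by rw [← pow_succ, Nat.sub_add_cancel hn]
  refine inv_eq_of_mul_eq_one_left ?_
  rw [← pow_add, ← hζ.pow_eq_one]
  congr 1
  omega

theorem cyclotomic_two_pow_eq_prod_quadratic (hζ : IsPrimitiveRoot ζ (2 ^ n)) (hn : 2 ≤ n) :
    cyclotomic (2 ^ n) K =
      ∏ i ∈ range (2 ^ (n - 2)), (X ^ 2 + C (-ζ ^ (2 * i + 1) + (-ζ ^ (2 * i + 1))⁻¹) * X + 1) := by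
  set N := 2 ^ (n - 2)
  have hN : 2 ^ (n - 1) = N + N := by
    rw [← two_mul, ← pow_succ']
    congr 1
    omega
  rw [hζ.cyclotomic_two_pow_eq_prod_odd_pow (by omega), hN, prod_range_add,
    ← prod_range_reflect (fun j ↦ X - C (ζ ^ (2 * (N + j) + 1))) N, ← prod_mul_distrib]
  -- the factor of index `N + (N - 1 - i)` is the inverse of the factor of index `i`
  refine prod_congr rfl fun i hi ↦ ?_
  rw [mem_range] at hi
  have hinv : ζ ^ (2 * (N + (N - 1 - i)) + 1) = (ζ ^ (2 * i + 1))⁻¹ := by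
    rw [hζ.inv_odd_pow_eq (by omega) (by omega)]
    congr 2
    omega
  have hne : -ζ ^ (2 * i + 1) ≠ 0 := neg_ne_zero.mpr (pow_ne_zero _ (hζ.ne_zero (by positivity)))
  rw [hinv, ← X_add_C_mul_X_add_C_inv hne, inv_neg, C_neg, C_neg, sub_eq_add_neg, sub_eq_add_neg]

theorem injective_neg_odd_pow_add_inv (hζ : IsPrimitiveRoot ζ (2 ^ n)) (hn : 2 ≤ n) :
    Function.Injective fun i : Fin (2 ^ (n - 2)) ↦
      -ζ ^ (2 * (i : ℕ) + 1) + (-ζ ^ (2 * (i : ℕ) + 1))⁻¹ := by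
  have h2n : 2 ^ n = 4 * 2 ^ (n - 2) := by
    rw [show 4 = 2 ^ 2 by rfl, ← pow_add, Nat.add_sub_cancel' hn]
  have hne : ∀ k, -ζ ^ k ≠ 0 := fun k ↦ neg_ne_zero.mpr (pow_ne_zero _ (hζ.ne_zero (by positivity)))
  intro i j hij
  rcases (add_inv_eq_add_inv_iff (hne _) (hne _)).mp hij with h | h
  · exact Fin.ext (by have := hζ.pow_inj (by omega) (by omega) (neg_inj.mp h); omega)
  · rw [inv_neg, neg_inj, ← mul_eq_one_iff_eq_inv₀ (neg_ne_zero.mp (hne _)), ← pow_add,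
      hζ.pow_eq_one_iff_dvd] at h
    have := Nat.le_of_dvd (by omega) h
    omega

end Field

end IsPrimitiveRoot

namespace FiniteField

variable {K L : Type*} [Field K] [Fintype K] [Field L] [Algebra K L]

theorem mem_range_algebraMap_of_pow_card_eq_self {x : L} (hx : x ^ Fintype.card K = x) :
    x ∈ (algebraMap K L).range := by
  have hsplits : (X ^ Fintype.card K - X : K[X]).Splits := by
    rw [splits_iff_card_roots, roots_X_pow_card_sub_X,
      X_pow_card_sub_X_natDegree_eq K Fintype.one_lt_card]
    rfl
  exact hsplits.mem_range_of_isRoot (X_pow_card_sub_X_ne_zero K Fintype.one_lt_card)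
    (by simp [hx])

theorem exists_algebraMap_eq_add_inv {u : L} (hu : u ^ (Fintype.card K + 1) = 1) :
    ∃ c : K, algebraMap K L c = u + u⁻¹ := by
  have hq : u ^ Fintype.card K = u⁻¹ := eq_inv_of_mul_eq_one_left (by rwa [← pow_succ])
  refine mem_range_algebraMap_of_pow_card_eq_self ?_
  rw [← frobeniusAlgHom_apply K L, map_add, map_inv₀, frobeniusAlgHom_apply, hq, inv_inv, add_comm]

end FiniteField

theorem irreducible_X_sq_add_C_mul_X_add_one {K L : Type*} [Field K] [Field L] [Algebra K L]
    (hK : ¬IsSquare (-1 : K)) {n : ℕ} (hn : 2 ≤ n) {u : L} (hu : IsPrimitiveRoot u (2 ^ n))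
    {c : K} (hc : algebraMap K L c = u + u⁻¹) : Irreducible (X ^ 2 + C c * X + 1) := by
  have hdeg : (X ^ 2 + C c * X + 1 : K[X]).natDegree = 2 := by compute_degree!
  rw [irreducible_iff_roots_eq_zero_of_degree_le_three hdeg.ge (hdeg.le.trans (by norm_num)),
    Multiset.eq_zero_iff_forall_notMem]
  intro r hr
  rw [mem_roots (by rintro h; simp [h] at hdeg)] at hr
  have hmap : (X ^ 2 + C c * X + 1).map (algebraMap K L) = (X + C u) * (X + C u⁻¹) := by
    rw [X_add_C_mul_X_add_C_inv (hu.ne_zero (by positivity)), ← hc]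
    simp
  have hroot : (algebraMap K L r + u) * (algebraMap K L r + u⁻¹) = 0 := by
    simpa [hmap] using hr.map (f := algebraMap K L)
  have hprim : IsPrimitiveRoot (algebraMap K L r) (2 ^ n) := by
    rcases mul_eq_zero.mp hroot with h | h
    · rw [eq_neg_of_add_eq_zero_left h]; exact hu.neg_of_two_pow hn
    · rw [eq_neg_of_add_eq_zero_left h]; exact hu.inv.neg_of_two_pow hn
  refine hK ⟨r ^ 2 ^ (n - 2), (algebraMap K L).injective ?_⟩
  rw [← pow_two, ← pow_mul, ← pow_succ, show n - 2 + 1 = n - 1 by omega]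
  simpa using (hprim.pow_two_pow_pred_eq_neg_one (by omega)).symm

theorem stmt18_general (Fq : Type*) [Field Fq] [Fintype Fq] (A m : ℕ)
    (hq : Fintype.card Fq = 2 ^ A * m - 1)
    (hq4 : Fintype.card Fq % 4 = 3)
    (n : ℕ) (hn2 : 2 ≤ n) (hnA : n ≤ A) :
    ∃ (u : Fin (2 ^ (n - 2)) → AlgebraicClosure Fq) (c : Fin (2 ^ (n - 2)) → Fq),
      (∀ i, IsPrimitiveRoot (u i) (2 ^ n)) ∧
      (∀ i, algebraMap Fq (AlgebraicClosure Fq) (c i) = u i + (u i)⁻¹) ∧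
      Function.Injective c ∧
      cyclotomic (2 ^ n) Fq = ∏ i, (X ^ 2 + C (c i) * X + 1) ∧
      ∀ i, Irreducible (X ^ 2 + C (c i) * X + (1 : Fq[X])) := by
  have hdvd : 2 ^ n ∣ Fintype.card Fq + 1 := by
    have : Fintype.card Fq + 1 = 2 ^ A * m := by have := Fintype.card_pos (α := Fq); omega
    exact this ▸ (pow_dvd_pow 2 hnA).mul_right m
  have : NeZero ((2 : ℕ) : Fq) :=
    ⟨by exact_mod_cast Ring.two_ne_zero (by rw [Ne, FiniteField.even_card_iff_char_two]; omega)⟩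
  obtain ⟨ζ, hζ⟩ := HasEnoughRootsOfUnity.exists_primitiveRoot (AlgebraicClosure Fq) (2 ^ n)
  set u : Fin (2 ^ (n - 2)) → AlgebraicClosure Fq := fun i ↦ -ζ ^ (2 * (i : ℕ) + 1)
  have hu : ∀ i, IsPrimitiveRoot (u i) (2 ^ n) :=
    fun i ↦ (hζ.odd_pow (odd_two_mul_add_one _)).neg_of_two_pow hn2
  choose c hc using fun i ↦
    FiniteField.exists_algebraMap_eq_add_inv (K := Fq) (((hu i).pow_eq_one_iff_dvd _).mpr hdvd)
  have hinj : Function.Injective c := by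
    refine Function.Injective.of_comp (f := algebraMap Fq (AlgebraicClosure Fq)) ?_
    convert hζ.injective_neg_odd_pow_add_inv hn2 using 1
    exact funext hc
  refine ⟨u, c, hu, hc, hinj, ?_, fun i ↦ irreducible_X_sq_add_C_mul_X_add_one
    (FiniteField.isSquare_neg_one_iff.not.mpr (by omega)) hn2 (hu i) (hc i)⟩
  apply map_injective _ (algebraMap Fq (AlgebraicClosure Fq)).injective
  simp only [Polynomial.map_prod, map_cyclotomic, Polynomial.map_add, Polynomial.map_mul,
    Polynomial.map_pow, map_X, map_C, Polynomial.map_one, hc]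
  rw [hζ.cyclotomic_two_pow_eq_prod_quadratic hn2,
    ← Fin.prod_univ_eq_prod_range
      (fun i ↦ X ^ 2 + C (-ζ ^ (2 * i + 1) + (-ζ ^ (2 * i + 1))⁻¹) * X + 1)]

theorem stmt18 (Fq : Type*) [Field Fq] [Fintype Fq] (A m : ℕ)
    (hA : 2 ≤ A) (hm : Odd m) (hq : Fintype.card Fq = 2 ^ A * m - 1)
    (hq4 : Fintype.card Fq % 4 = 3)
    (n : ℕ) (hn2 : 2 ≤ n) (hnA : n ≤ A) :
    ∃ (u : Fin (2 ^ (n - 2)) → AlgebraicClosure Fq) (c : Fin (2 ^ (n - 2)) → Fq),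
      (∀ i, IsPrimitiveRoot (u i) (2 ^ n)) ∧
      (∀ i, algebraMap Fq (AlgebraicClosure Fq) (c i) = u i + (u i)⁻¹) ∧
      Function.Injective c ∧
      cyclotomic (2 ^ n) Fq = ∏ i, (X ^ 2 + C (c i) * X + 1) ∧
      ∀ i, Irreducible (X ^ 2 + C (c i) * X + (1 : Fq[X])) :=
  stmt18_general Fq A m hq hq4 n hn2 hnA
end

section
/- Let q ≡ 3 (mod 4) be a prime power, r ≥ 3 odd with gcd(q, r) = 1, and suppose d_r = ord_r(q) is odd. Let q = 2^A m − 1 with A ≥ 2, m odd, and n > A. If u is a primitive 2^A-th root of unity in F_{q^2} and Z_u(x) = Σ_{i=0}^{d_r} u^i S_{i,w} x^{2^{n−A}(d_r − i)} is a monic irreducible factor of Φ_{2^n r} over F_{q^2} (with S_{i,w} the i-th elementary symmetric function of the conjugates of a primitive r-th root of unity w), then Z_u(x) · Z_{u^{-1}}(x) has coefficients in F_q, has degree 2^{n−A+1} d_r, and is irreducible over F_q; moreover Z_u ≠ Z_{u^{-1}}. -/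
/-!
The Frobenius `x ↦ x ^ q` permutes the conjugates `w ^ q ^ j` cyclically, so it fixes
every `S i`; since `2 ^ A ∣ q + 1` it sends `u` to `u⁻¹`, hence `Z u` to `Z u⁻¹` and back.
So `Z u * Z u⁻¹` is Frobenius-fixed and descends to `𝔽_q`. The constant terms
`u ^ (±d) * S d` differ because `u ^ (2 d) ≠ 1` for odd `d`, so `Z u ≠ Z u⁻¹`. Finally,
`Z u` and its Frobenius image `Z u⁻¹` are irreducible over `𝔽_{q²}`, so in a nontrivial
factorization over `𝔽_q` one factor is `Z u` up to a constant; being Frobenius-fixed, it is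
also `Z u⁻¹` up to a constant, forcing `Z u = Z u⁻¹`.
-/

open Polynomial

theorem Multiset.map_esymm {R S : Type*} [CommSemiring R] [CommSemiring S] (f : R →+* S)
    (s : Multiset R) (n : ℕ) : f (s.esymm n) = (s.map f).esymm n := by
  simp only [esymm, powersetCard_map, map_map, Function.comp_def, map_multiset_sum,
    map_multiset_prod]

theorem Multiset.map_range_add_one_of_eq {α : Type*} {f : ℕ → α} {d : ℕ} (h : f d = f 0) :
    (range d).map (fun j => f (j + 1)) = (range d).map f := by
  have hshift : range (d + 1) = 0 ::ₘ (range d).map (· + 1) := by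
    rw [add_comm, range_add, map_congr rfl fun j _ => add_comm 1 j]; rfl
  have h' := congrArg (map f) hshift
  rw [range_succ, map_cons, map_cons, map_map, h] at h'
  exact ((cons_inj_right _).mp h').symm

theorem Finset.esymm_map_val_range_self {R : Type*} [CommSemiring R] (f : ℕ → R) (d : ℕ) :
    ((range d).val.map f).esymm d = ∏ j ∈ range d, f j := by
  have hself := powersetCard_self (range d)
  rw [card_range] at hself
  rw [esymm_map_val, hself, sum_singleton]

theorem esymm_conjugates_map_eq_self {R : Type*} [CommRing R] (σ : R →+* R) {q : ℕ}
    (hσ : ∀ y, σ y = y ^ q) {x : R} {d : ℕ} (hx : x ^ q ^ d = x) (i : ℕ) :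
    σ (((Finset.range d).val.map fun j => x ^ q ^ j).esymm i) =
      ((Finset.range d).val.map fun j => x ^ q ^ j).esymm i := by
  rw [Multiset.map_esymm, Multiset.map_map, Finset.range_val]
  congr 1
  calc (Multiset.range d).map (σ ∘ fun j => x ^ q ^ j)
      = (Multiset.range d).map (fun j => x ^ q ^ (j + 1)) :=
        Multiset.map_congr rfl fun j _ => by rw [Function.comp_apply, hσ, ← pow_mul, pow_succ]
    _ = (Multiset.range d).map (fun j => x ^ q ^ j) :=
        Multiset.map_range_add_one_of_eq (f := fun j => x ^ q ^ j) (by rwa [pow_zero, pow_one])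

namespace IsPrimitiveRoot

theorem pow_pow_orderOf_eq_self {M : Type*} [CommMonoid M] {w : M} {r : ℕ}
    (hw : IsPrimitiveRoot w r) (q : ℕ) : w ^ q ^ orderOf (q : ZMod r) = w := by
  have hmod : q ^ orderOf (q : ZMod r) % r = 1 % r := by
    rw [← ZMod.natCast_eq_natCast_iff']
    push_cast
    exact pow_orderOf_eq_one _
  rw [← pow_mod_orderOf, ← hw.eq_orderOf, hmod, hw.eq_orderOf, pow_mod_orderOf, pow_one]

theorem pow_eq_inv_of_dvd_add_one {G : Type*} [DivisionCommMonoid G] {u : G} {k q : ℕ}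
    (hu : IsPrimitiveRoot u k) (hk : k ∣ q + 1) : u ^ q = u⁻¹ :=
  eq_inv_of_mul_eq_one_left <| by rw [← pow_succ]; exact (hu.pow_eq_one_iff_dvd _).mpr hk

theorem pow_ne_inv_pow_of_odd {G : Type*} [CommGroupWithZero G] {u : G} {A d : ℕ}
    (hu : IsPrimitiveRoot u (2 ^ A)) (hA : 2 ≤ A) (hd : Odd d) : u ^ d ≠ u⁻¹ ^ d := by
  intro h
  have h2d : 2 ^ A ∣ 2 * d := by
    rw [← hu.pow_eq_one_iff_dvd, two_mul, pow_add]
    nth_rw 2 [h]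
    rw [inv_pow, mul_inv_cancel₀ (pow_ne_zero _ (hu.ne_zero (by positivity)))]
  have h4 : 2 * 2 ∣ 2 * d := (pow_dvd_pow 2 hA).trans h2d
  exact Nat.not_even_iff_odd.mpr hd (even_iff_two_dvd.mpr (Nat.dvd_of_mul_dvd_mul_left two_pos h4))

end IsPrimitiveRoot

/-- The polynomial `Z_v = ∑_{i ≤ d} v^i S_i X^{N(d-i)}` of the paper, with `N = 2^{n-A}`. -/
noncomputable def zPoly {R : Type*} [CommRing R] (S : ℕ → R) (N d : ℕ) (v : R) : R[X] :=
  ∑ i ∈ Finset.range (d + 1), C (v ^ i * S i) * X ^ (N * (d - i))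

theorem map_zPoly_of_forall_eq {R : Type*} [CommRing R] {σ : R →+* R} {S : ℕ → R}
    (hS : ∀ i, σ (S i) = S i) (N d : ℕ) (v : R) :
    (zPoly S N d v).map σ = zPoly S N d (σ v) := by
  simp [zPoly, Polynomial.map_sum, hS]

theorem coeff_zPoly_zero {R : Type*} [CommRing R] (S : ℕ → R) {N : ℕ} (hN : N ≠ 0) (d : ℕ)
    (v : R) : (zPoly S N d v).coeff 0 = v ^ d * S d := by
  rw [zPoly, finsetSum_coeff, Finset.sum_eq_single_of_mem d (Finset.self_mem_range_succ d)]
  · rw [Nat.sub_self, mul_zero, pow_zero, mul_one, coeff_C_zero]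
  · intro i hi hid
    have hid : i < d := by have := Finset.mem_range.mp hi; omega
    rw [coeff_C_mul_X_pow, if_neg]
    exact (Nat.mul_pos (Nat.pos_of_ne_zero hN) (Nat.sub_pos_of_lt hid)).ne

theorem zPoly_ne_of_pow_ne {R : Type*} [CommRing R] [IsDomain R] {S : ℕ → R} {N d : ℕ}
    (hN : N ≠ 0) (hS : S d ≠ 0) {u v : R} (huv : u ^ d ≠ v ^ d) :
    zPoly S N d u ≠ zPoly S N d v := fun h =>
  huv <| mul_right_cancel₀ hS <| by rw [← coeff_zPoly_zero S hN, h, coeff_zPoly_zero S hN]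

theorem Polynomial.irreducible_of_map_eq_mul_map {k L : Type*} [Field k] [Field L] [Algebra k L]
    (σ : L →ₐ[k] L) {f g : L[X]} (hf : Irreducible f) (hg : Irreducible g) (hfm : f.Monic)
    (hσ : f.map σ = g) (hne : f ≠ g) {P : k[X]} (hP : P.map (algebraMap k L) = f * g) :
    Irreducible P := by
  have hgm : g.Monic := hσ ▸ hfm.map _
  -- If `a = f * C c` over `L`, applying `σ` (which fixes `a`) gives `a = g * C c`.
  have key : ∀ a b : k[X], P = a * b → f ∣ a.map (algebraMap k L) → IsUnit b := by
    rintro a b rfl ⟨B, hB⟩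
    have hgB : g = B * b.map (algebraMap k L) := by
      apply mul_left_cancel₀ hf.ne_zero
      rw [← hP, Polynomial.map_mul, hB, mul_assoc]
    refine (hg.isUnit_or_isUnit hgB).elim (fun hB1 => ?_) (isUnit_map _).mp
    obtain ⟨c, hc0, rfl⟩ := Polynomial.isUnit_iff.mp hB1
    have hσa : (a.map (algebraMap k L)).map σ = a.map (algebraMap k L) := by
      rw [Polynomial.map_map, σ.comp_algebraMap]
    rw [hB, Polynomial.map_mul, hσ, Polynomial.map_C] at hσa
    have hc : σ c = c := by
      simpa [hfm.leadingCoeff, hgm.leadingCoeff] using congrArg leadingCoeff hσa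
    rw [RingHom.coe_coe, hc] at hσa
    exact absurd (mul_right_cancel₀ (C_ne_zero.mpr hc0.ne_zero) hσa) hne.symm
  refine ⟨fun hu => ?_, fun a b hab => ?_⟩
  · rw [← isUnit_map (algebraMap k L), hP] at hu
    exact hf.not_isUnit (isUnit_of_mul_isUnit_left hu)
  · have hdvd : f ∣ a.map (algebraMap k L) * b.map (algebraMap k L) := by
      rw [← Polynomial.map_mul, ← hab, hP]; exact dvd_mul_right f g
    rcases hf.prime.dvd_or_dvd hdvd with h | h
    · exact Or.inr (key a b hab h)
    · exact Or.inl (key b a (hab.trans (mul_comm a b)) h)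

namespace FiniteField

variable {K L : Type*} [Field K] [Fintype K] [Field L] [Algebra K L]

theorem exists_algebraMap_eq_of_pow_card_eq {x : L} (hx : x ^ Fintype.card K = x) :
    ∃ a : K, algebraMap K L a = x := by
  classical
  set p : L[X] := X ^ Fintype.card K - X
  have hp : p ≠ 0 := X_pow_card_sub_X_ne_zero L Fintype.one_lt_card
  have hsub : Finset.univ.image (algebraMap K L) ⊆ p.roots.toFinset := by
    intro y hy
    obtain ⟨a, -, rfl⟩ := Finset.mem_image.mp hy
    simp [p, hp, ← map_pow, pow_card]
  have hcard : p.roots.toFinset.card ≤ (Finset.univ.image (algebraMap K L)).card := by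
    rw [Finset.card_image_of_injective _ (algebraMap K L).injective, Finset.card_univ]
    calc p.roots.toFinset.card ≤ Multiset.card p.roots := Multiset.toFinset_card_le _
      _ ≤ p.natDegree := p.card_roots'
      _ = Fintype.card K := X_pow_card_sub_X_natDegree_eq L Fintype.one_lt_card
  have hx' : x ∈ p.roots.toFinset := by simp [p, hp, hx]
  rw [← Finset.eq_of_subset_of_card_le hsub hcard] at hx'
  simpa using hx'

theorem exists_map_algebraMap_eq_of_map_frobenius_eq {f : L[X]}
    (hf : f.map (frobeniusAlgHom K L) = f) : ∃ P : K[X], P.map (algebraMap K L) = f :=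
  (mem_lifts _).mp <| (lifts_iff_coeff_lifts _).mpr fun j =>
    exists_algebraMap_eq_of_pow_card_eq (by simpa using congrArg (coeff · j) hf)

variable (K L) in
/-- The copy of `𝔽_{q^n}` in `L`. -/
def frobeniusFixedField (n : ℕ) : IntermediateField K L :=
  Subfield.toIntermediateField
    (((frobeniusAlgHom K L ^ n : L →ₐ[K] L) : L →+* L).eqLocusField (RingHom.id L))
    fun a => AlgHom.commutes _ a

theorem mem_frobeniusFixedField {n : ℕ} {x : L} :
    x ∈ frobeniusFixedField K L n ↔ x ^ Fintype.card K ^ n = x := by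
  change (frobeniusAlgHom K L ^ n) x = x ↔ _
  rw [AlgHom.coe_pow, coe_frobeniusAlgHom, pow_iterate]

theorem irreducible_of_map_eq_mul_map_frobenius {f : L[X]} (hfm : f.Monic)
    (hf : ∀ j, f.coeff j ^ Fintype.card K ^ 2 = f.coeff j)
    (hirr : ∀ P₁ P₂ : L[X], (∀ j, P₁.coeff j ^ Fintype.card K ^ 2 = P₁.coeff j) →
      (∀ j, P₂.coeff j ^ Fintype.card K ^ 2 = P₂.coeff j) → f = P₁ * P₂ →
        IsUnit P₁ ∨ IsUnit P₂)
    (hne : f ≠ f.map (frobeniusAlgHom K L)) {P : K[X]}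
    (hP : P.map (algebraMap K L) = f * f.map (frobeniusAlgHom K L)) : Irreducible P := by
  set F := frobeniusFixedField K L 2
  set ι := algebraMap F L
  set σ : F →+* F := (frobeniusAlgHom K F : F →+* F)
  have hι : Function.Injective ι := ι.injective
  have hmem : ∀ (g : F[X]) j, (g.map ι).coeff j ^ Fintype.card K ^ 2 = (g.map ι).coeff j :=
    fun g j => by rw [coeff_map]; exact mem_frobeniusFixedField.mp (g.coeff j).2
  have hσι : ∀ g : F[X], (g.map σ).map ι = (g.map ι).map (frobeniusAlgHom K L) := by
    intro g; rw [Polynomial.map_map, Polynomial.map_map]; rfl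
  obtain ⟨f₀, rfl⟩ : ∃ f₀ : F[X], f₀.map ι = f := (mem_lifts _).mp <|
    (lifts_iff_coeff_lifts _).mpr fun j => ⟨⟨_, mem_frobeniusFixedField.mpr (hf j)⟩, rfl⟩
  have hf₀m : f₀.Monic := monic_map_iff.mp hfm
  have hf₀ : Irreducible f₀ := by
    refine ⟨fun hu => hne ?_, fun a b hab => ?_⟩
    · rw [hf₀m.isUnit_iff.mp hu, Polynomial.map_one, Polynomial.map_one]
    · rcases hirr _ _ (hmem a) (hmem b) (by rw [hab, Polynomial.map_mul]) with h | h
      exacts [Or.inl ((isUnit_map ι).mp h), Or.inr ((isUnit_map ι).mp h)]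
  have hσσ : (f₀.map σ).map σ = f₀ := by
    apply map_injective ι hι
    rw [hσι, hσι, Polynomial.map_map]
    ext j
    simpa [← pow_mul, ← sq] using hf j
  have hg₀ : Irreducible (f₀.map σ) :=
    (hf₀m.map _).irreducible_of_irreducible_map _ _ (hσσ ▸ hf₀)
  refine irreducible_of_map_eq_mul_map (frobeniusAlgHom K F) hf₀ hg₀ hf₀m rfl ?_ ?_
  · exact fun h => hne (by rw [← hσι]; exact congrArg _ h)
  · apply map_injective ι hι
    rw [Polynomial.map_mul, hσι, Polynomial.map_map, ← hP]
    exact congrArg (map · P) (IsScalarTower.algebraMap_eq K F L).symm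

end FiniteField

theorem stmt19_general (Fq : Type*) [Field Fq] [Fintype Fq]
    (q : ℕ) (hq : q = Fintype.card Fq)
    (r : ℕ) (hrodd : Odd r)
    (d : ℕ) (hd : d = orderOf ((q : ZMod r))) (hdodd : Odd d)
    (A m : ℕ) (hA : 2 ≤ A) (hqAm : q = 2 ^ A * m - 1)
    (n : ℕ)
    (u w : AlgebraicClosure Fq)
    (hu : IsPrimitiveRoot u (2 ^ A)) (hw : IsPrimitiveRoot w r)
    -- `S i` is the i-th elementary symmetric function of the conjugates `w, w^q, …, w^{q^{d-1}}`
    (S : ℕ → AlgebraicClosure Fq)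
    (hS : ∀ i, S i = (((Finset.range d).val.map fun j => w ^ q ^ j)).esymm i)
    -- `Z v = Σ_{i=0}^{d} v^i S_i x^{2^{n-A}(d-i)}`
    (Z : AlgebraicClosure Fq → (AlgebraicClosure Fq)[X])
    (hZ : ∀ v, Z v = ∑ i ∈ Finset.range (d + 1), C (v ^ i * S i) * X ^ (2 ^ (n - A) * (d - i)))
    -- `Z u` is a monic irreducible factor of `Φ_{2^n r}` over `F_{q²}`:
    (hmon : (Z u).Monic)
    (hcoeffq2 : ∀ k, (Z u).coeff k ^ q ^ 2 = (Z u).coeff k)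
    (hdeg : (Z u).natDegree = 2 ^ (n - A) * d)
    (hirr2 : ∀ P₁ P₂ : (AlgebraicClosure Fq)[X],
        (∀ k, P₁.coeff k ^ q ^ 2 = P₁.coeff k) → (∀ k, P₂.coeff k ^ q ^ 2 = P₂.coeff k) →
        Z u = P₁ * P₂ → IsUnit P₁ ∨ IsUnit P₂) :
    (∃ P : Fq[X], P.map (algebraMap Fq (AlgebraicClosure Fq)) = Z u * Z u⁻¹ ∧
      P.natDegree = 2 ^ (n - A + 1) * d ∧ Irreducible P) ∧
    Z u ≠ Z u⁻¹ := by
  subst hq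
  set φ := FiniteField.frobeniusAlgHom Fq (AlgebraicClosure Fq)
  have hZ' : ∀ v, Z v = zPoly S (2 ^ (n - A)) d v := hZ
  have hwd : w ^ Fintype.card Fq ^ d = w := by rw [hd]; exact hw.pow_pow_orderOf_eq_self _
  have hZφ : ∀ v, (Z v).map φ = Z (v ^ Fintype.card Fq) := fun v => by
    rw [hZ', hZ', map_zPoly_of_forall_eq fun i => by
      rw [hS]; exact esymm_conjugates_map_eq_self (φ : _ →+* _) (fun _ => rfl) hwd i]
    rfl
  have huq : u ^ Fintype.card Fq = u⁻¹ :=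
    hu.pow_eq_inv_of_dvd_add_one ⟨m, by have := Fintype.one_lt_card (α := Fq); omega⟩
  have hZu : (Z u).map φ = Z u⁻¹ := by rw [hZφ, huq]
  have hZu' : (Z u⁻¹).map φ = Z u := by rw [hZφ, inv_pow, huq, inv_inv]
  have hSd : S d ≠ 0 := by
    rw [hS, Finset.esymm_map_val_range_self]
    exact Finset.prod_ne_zero_iff.mpr fun j _ => pow_ne_zero _ (hw.ne_zero hrodd.pos.ne')
  have hne : Z u ≠ Z u⁻¹ := by
    rw [hZ', hZ']
    exact zPoly_ne_of_pow_ne (by positivity) hSd (hu.pow_ne_inv_pow_of_odd hA hdodd)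
  obtain ⟨P, hP⟩ := FiniteField.exists_map_algebraMap_eq_of_map_frobenius_eq (K := Fq)
    (f := Z u * Z u⁻¹) (by rw [Polynomial.map_mul, hZu, hZu', mul_comm])
  refine ⟨⟨P, hP, ?_, FiniteField.irreducible_of_map_eq_mul_map_frobenius hmon hcoeffq2 hirr2
    (by rwa [hZu]) (by rwa [hZu])⟩, hne⟩
  have hdeg' : (Z u⁻¹).natDegree = 2 ^ (n - A) * d := by
    rw [← hZu, natDegree_map_eq_of_injective (RingHom.injective _), hdeg]
  rw [← natDegree_map_eq_of_injective (algebraMap Fq (AlgebraicClosure Fq)).injective, hP,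
    natDegree_mul hmon.ne_zero (hZu ▸ hmon.map _).ne_zero, hdeg, hdeg', pow_succ]
  ring

theorem stmt19 (Fq : Type*) [Field Fq] [Fintype Fq]
    (q : ℕ) (hq : q = Fintype.card Fq) (hq4 : q % 4 = 3)
    (r : ℕ) (hr3 : 3 ≤ r) (hrodd : Odd r) (hcop : Nat.Coprime r q)
    (d : ℕ) (hd : d = orderOf ((q : ZMod r))) (hdodd : Odd d)
    (A m : ℕ) (hA : 2 ≤ A) (hm : Odd m) (hqAm : q = 2 ^ A * m - 1)
    (n : ℕ) (hn : A < n)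
    (u w : AlgebraicClosure Fq)
    (hu : IsPrimitiveRoot u (2 ^ A)) (hw : IsPrimitiveRoot w r)
    -- `S i` is the i-th elementary symmetric function of the conjugates `w, w^q, …, w^{q^{d-1}}`
    (S : ℕ → AlgebraicClosure Fq)
    (hS : ∀ i, S i = (((Finset.range d).val.map fun j => w ^ q ^ j)).esymm i)
    -- `Z v = Σ_{i=0}^{d} v^i S_i x^{2^{n-A}(d-i)}`
    (Z : AlgebraicClosure Fq → (AlgebraicClosure Fq)[X])
    (hZ : ∀ v, Z v = ∑ i ∈ Finset.range (d + 1), C (v ^ i * S i) * X ^ (2 ^ (n - A) * (d - i)))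
    -- `Z u` is a monic irreducible factor of `Φ_{2^n r}` over `F_{q²}`:
    (hmon : (Z u).Monic)
    (hfac : Z u ∣ (cyclotomic (2 ^ n * r) Fq).map (algebraMap Fq (AlgebraicClosure Fq)))
    (hcoeffq2 : ∀ k, (Z u).coeff k ^ q ^ 2 = (Z u).coeff k)
    (hdeg : (Z u).natDegree = 2 ^ (n - A) * d)
    (hirr2 : ∀ P₁ P₂ : (AlgebraicClosure Fq)[X],
        (∀ k, P₁.coeff k ^ q ^ 2 = P₁.coeff k) → (∀ k, P₂.coeff k ^ q ^ 2 = P₂.coeff k) →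
        Z u = P₁ * P₂ → IsUnit P₁ ∨ IsUnit P₂) :
    (∃ P : Fq[X], P.map (algebraMap Fq (AlgebraicClosure Fq)) = Z u * Z u⁻¹ ∧
      P.natDegree = 2 ^ (n - A + 1) * d ∧ Irreducible P) ∧
    Z u ≠ Z u⁻¹ :=
  stmt19_general Fq q hq r hrodd d hd hdodd A m hA hqAm n u w hu hw S hS Z hZ hmon hcoeffq2 hdeg
    hirr2
end
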